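/- arXiv:2509.04227 — 4 statements merged into one kernel-verified Lean document; each statement's English description precedes it below -/
import Mathlib

section
/- Let q₀ > 1 and q₁ = q₀/(q₀−1). Then dim_H 𝒰_{q₀,q₁} = 1. -/
open Filter Topology

/-- The base corresponding to a digit: `q0` for digit `0` (`false`), `q1` for digit `1` (`true`). -/
noncomputable def qb (q0 q1 : ℝ) (d : Bool) : ℝ := if d then q1 else q0

/-- `piE q0 q1 i = Σ_{k=1}^∞ i_k / (q_{i_1} ⋯ q_{i_k})`, with 0-based indexing. -/
noncomputable def piE (q0 q1 : ℝ) (i : ℕ → Bool) : ℝ :=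
  ∑' k : ℕ, (if i k then (1 : ℝ) else 0) / ∏ j ∈ Finset.range (k + 1), qb q0 q1 (i j)

/-- Strict lexicographic order `≺` on binary sequences. -/
def lexLt (u v : ℕ → Bool) : Prop := ∃ n : ℕ, (∀ m, m < n → u m = v m) ∧ u n < v n

/-- Non-strict lexicographic order `⪯`. -/
def lexLe (u v : ℕ → Bool) : Prop := lexLt u v ∨ u = v

/-- The tail `i_{n+1} i_{n+2} ⋯` of a sequence (0-based: drop the first `n` entries). -/
def shiftTail (i : ℕ → Bool) (n : ℕ) : ℕ → Bool := fun k => i (n + k)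

/-- `Omega a b` : sequences none of whose tails lies in the open lexicographic interval `]a,b[`. -/
def Omega (a b : ℕ → Bool) : Set (ℕ → Bool) :=
  {i | ∀ n : ℕ, ¬ (lexLt a (shiftTail i n) ∧ lexLt (shiftTail i n) b)}

/-- `(a,b) ∈ W` : `a` starts with digit 0, `b` starts with digit 1, and `a, b ∈ Ω_{a,b}`. -/
def memW (a b : ℕ → Bool) : Prop :=
  a 0 = false ∧ b 0 = true ∧ a ∈ Omega a b ∧ b ∈ Omega a b

/-- The set `L_{a,b,n}` of length-`n` prefixes of elements of `Ω_{a,b}`, as a finset. -/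
noncomputable def Lwords (a b : ℕ → Bool) (n : ℕ) : Finset (Fin n → Bool) :=
  Set.Finite.toFinset
    (Set.toFinite {w : Fin n → Bool | ∃ i ∈ Omega a b, ∀ k : Fin n, i k.1 = w k})

/-- Topological entropy `h(Ω_{a,b}) = lim_{n→∞} (1/n) log #L_{a,b,n}`; the limit exists by
subadditivity, hence it coincides with the `limsup` used here. -/
noncomputable def entropy (a b : ℕ → Bool) : ℝ :=
  Filter.limsup (fun n : ℕ => Real.log ((Lwords a b n).card) / n) Filter.atTop

/-- The univoque set `𝒰_{q₀,q₁}` of reals with exactly one `(q₀,q₁)`-expansion. -/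
def univoque (q0 q1 : ℝ) : Set ℝ := {x | ∃! i : ℕ → Bool, piE q0 q1 i = x}

/-- The generalized Komornik–Loreti constant
`𝒦(q₀) = inf {q₁ > 1 : 𝒰_{q₀,q₁} is uncountable}`. -/
noncomputable def Kconst (q0 : ℝ) : ℝ := sInf {q1 : ℝ | 1 < q1 ∧ ¬ (univoque q0 q1).Countable}

namespace Stmt5

variable {q0 q1 : ℝ}

/-- One step of the expansion: `y ↦ (d + y)/q_d`. -/
noncomputable def fstep (q0 q1 : ℝ) (d : Bool) (y : ℝ) : ℝ :=
  ((if d then (1:ℝ) else 0) + y) / qb q0 q1 d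

/-- Apply a finite word of steps. -/
noncomputable def applyL (q0 q1 : ℝ) : List Bool → ℝ → ℝ
  | [], y => y
  | d :: w, y => fstep q0 q1 d (applyL q0 q1 w y)

lemma one_lt_qb (h0 : 1 < q0) (h1 : 1 < q1) (d : Bool) : 1 < qb q0 q1 d := by
  cases d <;> simpa [qb]

lemma qb_pos (h0 : 1 < q0) (h1 : 1 < q1) (d : Bool) : 0 < qb q0 q1 d :=
  lt_trans one_pos (one_lt_qb h0 h1 d)

lemma min_le_qb (d : Bool) : min q0 q1 ≤ qb q0 q1 d := by
  cases d <;> simp [qb, min_le_left, min_le_right]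

lemma prod_pos (h0 : 1 < q0) (h1 : 1 < q1) (i : ℕ → Bool) (n : ℕ) :
    0 < ∏ j ∈ Finset.range n, qb q0 q1 (i j) :=
  Finset.prod_pos fun j _ => qb_pos h0 h1 (i j)

lemma pow_le_prod (h0 : 1 < q0) (h1 : 1 < q1) (i : ℕ → Bool) (n : ℕ) :
    (min q0 q1) ^ n ≤ ∏ j ∈ Finset.range n, qb q0 q1 (i j) := by
  have := Finset.prod_le_prod (s := Finset.range n)
    (f := fun _ => min q0 q1) (g := fun j => qb q0 q1 (i j))
    (fun j _ => le_of_lt (lt_min (lt_trans one_pos h0) (lt_trans one_pos h1)))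
    (fun j _ => min_le_qb (i j))
  simpa using this

lemma one_le_prod (h0 : 1 < q0) (h1 : 1 < q1) (i : ℕ → Bool) (n : ℕ) :
    1 ≤ ∏ j ∈ Finset.range n, qb q0 q1 (i j) :=
  le_trans (one_le_pow₀ (le_of_lt (lt_min h0 h1))) (pow_le_prod h0 h1 i n)

lemma term_le (h0 : 1 < q0) (h1 : 1 < q1) (i : ℕ → Bool) (k : ℕ) :
    (if i k then (1 : ℝ) else 0) / ∏ j ∈ Finset.range (k + 1), qb q0 q1 (i j)
      ≤ ((min q0 q1)⁻¹) ^ k := by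
  have hc : 1 < min q0 q1 := lt_min h0 h1
  have hc0 : (0:ℝ) < min q0 q1 := lt_trans one_pos hc
  have hP := prod_pos h0 h1 i (k + 1)
  calc (if i k then (1 : ℝ) else 0) / ∏ j ∈ Finset.range (k + 1), qb q0 q1 (i j)
      ≤ 1 / ∏ j ∈ Finset.range (k + 1), qb q0 q1 (i j) := by
        gcongr
        split_ifs <;> norm_num
    _ ≤ 1 / (min q0 q1) ^ k := by
        apply one_div_le_one_div_of_le (pow_pos hc0 k)
        exact le_trans (pow_le_pow_right₀ hc.le (Nat.le_succ k)) (pow_le_prod h0 h1 i (k+1))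
    _ = ((min q0 q1)⁻¹) ^ k := by rw [one_div, inv_pow]

lemma summable_piE (h0 : 1 < q0) (h1 : 1 < q1) (i : ℕ → Bool) :
    Summable (fun k : ℕ =>
      (if i k then (1 : ℝ) else 0) / ∏ j ∈ Finset.range (k + 1), qb q0 q1 (i j)) := by
  have hc : 1 < min q0 q1 := lt_min h0 h1
  have hc0 : (0:ℝ) < min q0 q1 := lt_trans one_pos hc
  refine Summable.of_nonneg_of_le (fun k => ?_) (fun k => term_le h0 h1 i k)
    (summable_geometric_of_lt_one (le_of_lt (inv_pos.2 hc0)) ?_)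
  · have := (prod_pos h0 h1 i (k+1)).le
    positivity
  · exact inv_lt_one_of_one_lt₀ hc

lemma piE_nonneg (h0 : 1 < q0) (h1 : 1 < q1) (i : ℕ → Bool) : 0 ≤ piE q0 q1 i := by
  refine tsum_nonneg fun k => ?_
  have := (prod_pos h0 h1 i (k+1)).le
  positivity

/-- Under the relation `(q0-1) * q1 = q0`, every expansion value is at most `q0 - 1`. -/
lemma piE_le (h0 : 1 < q0) (h1 : 1 < q1) (hr : (q0 - 1) * q1 = q0) (i : ℕ → Bool) :
    piE q0 q1 i ≤ q0 - 1 := by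
  set M := q0 - 1 with hM
  have hM0 : 0 < M := by simp [hM]; linarith
  have key : ∀ k : ℕ,
      (if i k then (1 : ℝ) else 0) / ∏ j ∈ Finset.range (k + 1), qb q0 q1 (i j)
        ≤ M / ∏ j ∈ Finset.range k, qb q0 q1 (i j)
          - M / ∏ j ∈ Finset.range (k+1), qb q0 q1 (i j) := by
    intro k
    have hPk := prod_pos h0 h1 i k
    have hq := qb_pos h0 h1 (i k)
    have hprod : ∏ j ∈ Finset.range (k+1), qb q0 q1 (i j)
        = (∏ j ∈ Finset.range k, qb q0 q1 (i j)) * qb q0 q1 (i k) :=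
      Finset.prod_range_succ _ _
    have hd : (if i k then (1 : ℝ) else 0) ≤ M * (qb q0 q1 (i k) - 1) := by
      cases hik : i k
      · have : 1 < qb q0 q1 false := one_lt_qb h0 h1 false
        simp only [hik, Bool.false_eq_true, if_false]
        nlinarith
      · have : qb q0 q1 true = q1 := rfl
        simp only [hik, if_true, this]
        nlinarith
    rw [hprod]
    rw [div_sub_div _ _ (ne_of_gt hPk) (ne_of_gt (mul_pos hPk hq))]
    rw [div_le_div_iff₀ (mul_pos hPk hq) (mul_pos hPk (mul_pos hPk hq))]
    have expand : M * ((∏ j ∈ Finset.range k, qb q0 q1 (i j)) * qb q0 q1 (i k))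
        - (∏ j ∈ Finset.range k, qb q0 q1 (i j)) * M
        = (M * (qb q0 q1 (i k) - 1)) * (∏ j ∈ Finset.range k, qb q0 q1 (i j)) := by ring
    nlinarith [mul_le_mul_of_nonneg_right hd (le_of_lt (mul_pos hPk (mul_pos hPk hq)))]
  refine Real.tsum_le_of_sum_range_le (fun k => ?_) (fun n => ?_)
  · have := (prod_pos h0 h1 i (k+1)).le
    positivity
  · calc ∑ k ∈ Finset.range n,
        (if i k then (1 : ℝ) else 0) / ∏ j ∈ Finset.range (k + 1), qb q0 q1 (i j)
        ≤ ∑ k ∈ Finset.range n,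
          (M / ∏ j ∈ Finset.range k, qb q0 q1 (i j)
            - M / ∏ j ∈ Finset.range (k+1), qb q0 q1 (i j)) :=
          Finset.sum_le_sum fun k _ => key k
      _ = M / ∏ j ∈ Finset.range 0, qb q0 q1 (i j)
            - M / ∏ j ∈ Finset.range n, qb q0 q1 (i j) :=
          Finset.sum_range_sub' (fun k => M / ∏ j ∈ Finset.range k, qb q0 q1 (i j)) n
      _ ≤ M := by
          simp only [Finset.range_zero, Finset.prod_empty, div_one]
          have := div_nonneg hM0.le (prod_pos h0 h1 i n).le
          linarith

/-- The fundamental recursion: `piE i = fstep (i 0) (piE (shiftTail i 1))`. -/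
lemma piE_rec (h0 : 1 < q0) (h1 : 1 < q1) (i : ℕ → Bool) :
    piE q0 q1 i = fstep q0 q1 (i 0) (piE q0 q1 (shiftTail i 1)) := by
  have hs := summable_piE h0 h1 i
  have hq0' : qb q0 q1 (i 0) ≠ 0 := ne_of_gt (qb_pos h0 h1 (i 0))
  have hshift : ∀ k : ℕ,
      (if i (k+1) then (1 : ℝ) else 0) / ∏ j ∈ Finset.range (k + 2), qb q0 q1 (i j)
      = ((if shiftTail i 1 k then (1 : ℝ) else 0)
          / ∏ j ∈ Finset.range (k + 1), qb q0 q1 (shiftTail i 1 j)) * (qb q0 q1 (i 0))⁻¹ := by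
    intro k
    have hprod : ∏ j ∈ Finset.range (k + 2), qb q0 q1 (i j)
        = (∏ j ∈ Finset.range (k + 1), qb q0 q1 (i (j + 1))) * qb q0 q1 (i 0) :=
      Finset.prod_range_succ' (fun j => qb q0 q1 (i j)) (k+1)
    have hsh : ∀ j, shiftTail i 1 j = i (j + 1) := fun j => by
      simp [shiftTail, Nat.add_comm]
    simp only [hsh, hprod]
    rw [← div_div, div_eq_mul_inv]
  unfold piE
  rw [Summable.tsum_eq_zero_add hs]
  simp only [hshift]
  rw [tsum_mul_right]
  show (if i 0 then (1:ℝ) else 0) / ∏ j ∈ Finset.range 1, qb q0 q1 (i j)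
      + piE q0 q1 (shiftTail i 1) * (qb q0 q1 (i 0))⁻¹
      = fstep q0 q1 (i 0) (piE q0 q1 (shiftTail i 1))
  rw [Finset.prod_range_one]
  unfold fstep
  cases hi0 : i 0 <;> simp only [hi0, Bool.false_eq_true, if_false, if_true] <;>
    field_simp <;> ring

/-- If the first digit is `0`, the value is at most the threshold `(q0-1)/q0`. -/
lemma piE_false_le (h0 : 1 < q0) (h1 : 1 < q1) (hr : (q0 - 1) * q1 = q0)
    (i : ℕ → Bool) (hi : i 0 = false) : piE q0 q1 i ≤ (q0 - 1) / q0 := by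
  rw [piE_rec h0 h1 i, hi]
  unfold fstep qb
  simp only [Bool.false_eq_true, if_false, zero_add]
  exact div_le_div_of_nonneg_right (piE_le h0 h1 hr _) (by linarith)

/-- If the first digit is `1`, the value is at least the threshold `(q0-1)/q0`. -/
lemma piE_true_ge (h0 : 1 < q0) (h1 : 1 < q1) (hr : (q0 - 1) * q1 = q0)
    (i : ℕ → Bool) (hi : i 0 = true) : (q0 - 1) / q0 ≤ piE q0 q1 i := by
  rw [piE_rec h0 h1 i, hi]
  unfold fstep qb
  simp only [if_true]
  have ht : 0 ≤ piE q0 q1 (shiftTail i 1) := piE_nonneg h0 h1 _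
  have hq1' : (0:ℝ) < q1 := by linarith
  have hq0' : (0:ℝ) < q0 := by linarith
  rw [div_le_div_iff₀ hq0' hq1']
  nlinarith

lemma applyL_sub (h0 : 1 < q0) (h1 : 1 < q1) (w : List Bool) (y z : ℝ) :
    applyL q0 q1 w y - applyL q0 q1 w z = (y - z) / (w.map (qb q0 q1)).prod := by
  induction w with
  | nil => simp [applyL]
  | cons d w ih =>
    simp only [applyL, fstep, List.map_cons, List.prod_cons]
    rw [div_sub_div_same, ← div_div]
    rw [show (if d then (1:ℝ) else 0) + applyL q0 q1 w y
        - ((if d then (1:ℝ) else 0) + applyL q0 q1 w z)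
        = applyL q0 q1 w y - applyL q0 q1 w z by ring, ih]
    rw [div_div, div_div, mul_comm]

lemma wordProd_pos (h0 : 1 < q0) (h1 : 1 < q1) (w : List Bool) :
    0 < (w.map (qb q0 q1)).prod := by
  induction w with
  | nil => simp
  | cons d w ih =>
    simp only [List.map_cons, List.prod_cons]
    exact mul_pos (qb_pos h0 h1 d) ih

lemma applyL_inj (h0 : 1 < q0) (h1 : 1 < q1) (w : List Bool) {y z : ℝ}
    (h : applyL q0 q1 w y = applyL q0 q1 w z) : y = z := by
  have := applyL_sub h0 h1 w y z
  rw [h, sub_self] at this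
  have h2 := (div_eq_zero_iff.1 this.symm).resolve_right
    (ne_of_gt (wordProd_pos h0 h1 w))
  linarith

lemma applyL_append (w₁ w₂ : List Bool) (y : ℝ) :
    applyL q0 q1 (w₁ ++ w₂) y = applyL q0 q1 w₁ (applyL q0 q1 w₂ y) := by
  induction w₁ with
  | nil => simp [applyL]
  | cons d w ih => simp [applyL, ih]

/-- Decompose `piE` along a length-`n` prefix. -/
lemma piE_prefix (h0 : 1 < q0) (h1 : 1 < q1) :
    ∀ (n : ℕ) (i : ℕ → Bool),
      piE q0 q1 i
        = applyL q0 q1 (List.ofFn fun k : Fin n => i k.1) (piE q0 q1 (shiftTail i n)) := by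
  intro n
  induction n with
  | zero =>
    intro i
    have : shiftTail i 0 = i := by funext k; simp [shiftTail]
    simp [applyL, this]
  | succ n ih =>
    intro i
    have h2 : shiftTail (shiftTail i 1) n = shiftTail i (n+1) := by
      funext k; simp [shiftTail]; congr 1; omega
    have h3 : (List.ofFn fun k : Fin (n+1) => i k.1)
        = i 0 :: List.ofFn fun k : Fin n => shiftTail i 1 k.1 := by
      rw [List.ofFn_succ]
      refine congrArg₂ _ rfl (congrArg _ (funext fun k => ?_))
      simp [shiftTail, Fin.val_succ, Nat.add_comm]
    rw [h3]
    simp only [applyL]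
    rw [← h2, ← ih (shiftTail i 1), piE_rec h0 h1 i]

/-- The expansion map `T`. -/
noncomputable def Tmap (q0 q1 : ℝ) (x : ℝ) : ℝ :=
  if x < (q0 - 1) / q0 then q0 * x else q1 * x - 1

/-- The digit of a point: `true` iff `x ≥ (q0-1)/q0`. -/
noncomputable def dig (q0 q1 : ℝ) (x : ℝ) : Bool := decide (¬ x < (q0 - 1) / q0)

/-- The digit sequence of a point. -/
noncomputable def digs (q0 q1 : ℝ) (x : ℝ) (n : ℕ) : Bool :=
  dig q0 q1 ((Tmap q0 q1)^[n] x)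

lemma Tmap_mem (h0 : 1 < q0) (h1 : 1 < q1) (hr : (q0 - 1) * q1 = q0)
    {x : ℝ} (hx : x ∈ Set.Icc (0:ℝ) (q0 - 1)) : Tmap q0 q1 x ∈ Set.Icc (0:ℝ) (q0 - 1) := by
  obtain ⟨hx0, hx1⟩ := hx
  have hq0' : (0:ℝ) < q0 := by linarith
  unfold Tmap
  split_ifs with h
  · have h' := (lt_div_iff₀ hq0').1 h
    constructor
    · positivity
    · nlinarith
  · push_neg at h
    have h' := (div_le_iff₀ hq0').1 h
    constructor <;> nlinarith

lemma fstep_dig (h0 : 1 < q0) (h1 : 1 < q1) (x : ℝ) :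
    fstep q0 q1 (dig q0 q1 x) (Tmap q0 q1 x) = x := by
  have hq0' : q0 ≠ 0 := by linarith
  have hq1' : q1 ≠ 0 := by linarith
  by_cases h : x < (q0 - 1) / q0
  · have hd : dig q0 q1 x = false := by simp [dig, h]
    rw [hd]
    unfold fstep qb Tmap
    rw [if_pos h]
    simp only [Bool.false_eq_true, if_false, zero_add]
    field_simp [mul_comm]
  · have hd : dig q0 q1 x = true := by simp [dig, h]
    rw [hd]
    unfold fstep qb Tmap
    rw [if_neg h]
    simp only [if_true]
    field_simp
    ring

lemma iter_mem (h0 : 1 < q0) (h1 : 1 < q1) (hr : (q0 - 1) * q1 = q0)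
    {x : ℝ} (hx : x ∈ Set.Icc (0:ℝ) (q0 - 1)) (n : ℕ) :
    (Tmap q0 q1)^[n] x ∈ Set.Icc (0:ℝ) (q0 - 1) := by
  induction n with
  | zero => simpa using hx
  | succ n ih =>
    rw [Function.iterate_succ_apply']
    exact Tmap_mem h0 h1 hr ih

lemma digs_shift (x : ℝ) (n : ℕ) :
    shiftTail (digs q0 q1 x) n = digs q0 q1 ((Tmap q0 q1)^[n] x) := by
  funext k
  show digs q0 q1 x (n + k) = dig q0 q1 ((Tmap q0 q1)^[k] ((Tmap q0 q1)^[n] x))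
  unfold digs
  rw [← Function.iterate_add_apply, Nat.add_comm n k]

lemma x_prefix (h0 : 1 < q0) (h1 : 1 < q1) (hr : (q0 - 1) * q1 = q0)
    {x : ℝ} (hx : x ∈ Set.Icc (0:ℝ) (q0 - 1)) (n : ℕ) :
    x = applyL q0 q1 (List.ofFn fun k : Fin n => digs q0 q1 x k.1) ((Tmap q0 q1)^[n] x) := by
  induction n with
  | zero => simp [applyL]
  | succ n ih =>
    have hofn : (List.ofFn fun k : Fin (n+1) => digs q0 q1 x k.1)
        = (List.ofFn fun k : Fin n => digs q0 q1 x k.1) ++ [digs q0 q1 x n] := by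
      rw [List.ofFn_succ']
      simp [List.concat_eq_append]
    rw [hofn, applyL_append]
    rw [Function.iterate_succ_apply']
    have : fstep q0 q1 (digs q0 q1 x n) (Tmap q0 q1 ((Tmap q0 q1)^[n] x))
        = (Tmap q0 q1)^[n] x := fstep_dig h0 h1 _
    simp only [applyL, this]
    exact ih

lemma wordProd_ge (h0 : 1 < q0) (h1 : 1 < q1) (w : List Bool) :
    (min q0 q1) ^ w.length ≤ (w.map (qb q0 q1)).prod := by
  induction w with
  | nil => simp
  | cons d w ih =>
    simp only [List.map_cons, List.prod_cons, List.length_cons, pow_succ]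
    rw [mul_comm ((min q0 q1) ^ w.length)]
    exact mul_le_mul (min_le_qb d) ih
      (pow_nonneg (le_of_lt (lt_min (by linarith) (by linarith))) _)
      (le_of_lt (qb_pos h0 h1 d))

/-- Existence: the digit sequence of `x ∈ [0, q0-1]` is an expansion of `x`. -/
lemma piE_digs (h0 : 1 < q0) (h1 : 1 < q1) (hr : (q0 - 1) * q1 = q0)
    {x : ℝ} (hx : x ∈ Set.Icc (0:ℝ) (q0 - 1)) : piE q0 q1 (digs q0 q1 x) = x := by
  have hc : 1 < min q0 q1 := lt_min h0 h1
  have hc0 : (0:ℝ) < min q0 q1 := lt_trans one_pos hc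
  have key : ∀ n : ℕ, |piE q0 q1 (digs q0 q1 x) - x| ≤ (q0 - 1) * ((min q0 q1)⁻¹) ^ n := by
    intro n
    set w := List.ofFn fun k : Fin n => digs q0 q1 x k.1 with hw
    have h2 : piE q0 q1 (digs q0 q1 x)
        = applyL q0 q1 w (piE q0 q1 (digs q0 q1 ((Tmap q0 q1)^[n] x))) := by
      rw [piE_prefix h0 h1 n (digs q0 q1 x), digs_shift]
    have h3 : x = applyL q0 q1 w ((Tmap q0 q1)^[n] x) := x_prefix h0 h1 hr hx n
    set y := (Tmap q0 q1)^[n] x with hy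
    have hA0 : 0 ≤ piE q0 q1 (digs q0 q1 y) := piE_nonneg h0 h1 _
    have hA1 : piE q0 q1 (digs q0 q1 y) ≤ q0 - 1 := piE_le h0 h1 hr _
    have hymem : y ∈ Set.Icc (0:ℝ) (q0 - 1) := iter_mem h0 h1 hr hx n
    have hnum : |piE q0 q1 (digs q0 q1 y) - y| ≤ q0 - 1 := by
      rw [abs_le]
      constructor
      · have := hymem.2
        linarith
      · have := hymem.1
        linarith
    have hp : (min q0 q1) ^ n ≤ (w.map (qb q0 q1)).prod := by
      have := wordProd_ge h0 h1 w
      rwa [hw, List.length_ofFn] at this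
    rw [h2]
    rw [h3]
    rw [applyL_sub h0 h1 w _ y, abs_div, abs_of_pos (wordProd_pos h0 h1 w)]
    calc |piE q0 q1 (digs q0 q1 y) - y| / (w.map (qb q0 q1)).prod
        ≤ (q0 - 1) / (min q0 q1) ^ n :=
          div_le_div₀ (by linarith) hnum (pow_pos hc0 n) hp
      _ = (q0 - 1) * ((min q0 q1)⁻¹) ^ n := by
          rw [div_eq_mul_inv, inv_pow]
  have htend : Filter.Tendsto (fun n : ℕ => (q0 - 1) * ((min q0 q1)⁻¹) ^ n)
      Filter.atTop (nhds 0) := by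
    rw [show (0:ℝ) = (q0 - 1) * 0 by ring]
    exact Filter.Tendsto.const_mul _
      (tendsto_pow_atTop_nhds_zero_of_lt_one (by positivity) (inv_lt_one_of_one_lt₀ hc))
  have habs : |piE q0 q1 (digs q0 q1 x) - x| ≤ 0 := ge_of_tendsto' htend key
  have := abs_nonneg (piE q0 q1 (digs q0 q1 x) - x)
  have : |piE q0 q1 (digs q0 q1 x) - x| = 0 := le_antisymm habs this
  have := abs_eq_zero.1 this
  linarith

/-- If two distinct sequences have the same value, that value is in the countable
exceptional set of images of the threshold point. -/
lemma nonuniq_mem (h0 : 1 < q0) (h1 : 1 < q1) (hr : (q0 - 1) * q1 = q0)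
    {i j : ℕ → Bool} (hij : piE q0 q1 i = piE q0 q1 j) (hne : i ≠ j) :
    ∃ w : List Bool, applyL q0 q1 w ((q0 - 1) / q0) = piE q0 q1 i := by
  have hex : ∃ n, i n ≠ j n := Function.ne_iff.1 hne
  classical
  set n := Nat.find hex with hn
  have hdiff : i n ≠ j n := Nat.find_spec hex
  have hmin : ∀ m, m < n → i m = j m := fun m hm =>
    of_not_not (Nat.find_min hex hm)
  have hwords : (List.ofFn fun k : Fin n => i k.1) = (List.ofFn fun k : Fin n => j k.1) := by
    refine congrArg _ (funext fun k => ?_)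
    exact hmin k.1 k.2
  set w := List.ofFn fun k : Fin n => i k.1 with hw
  have h2 : piE q0 q1 i = applyL q0 q1 w (piE q0 q1 (shiftTail i n)) := piE_prefix h0 h1 n i
  have h3 : piE q0 q1 j = applyL q0 q1 w (piE q0 q1 (shiftTail j n)) := by
    rw [hwords]; exact piE_prefix h0 h1 n j
  have htails : piE q0 q1 (shiftTail i n) = piE q0 q1 (shiftTail j n) := by
    apply applyL_inj h0 h1 w
    rw [← h2, ← h3, hij]
  have hi0 : shiftTail i n 0 = i n := by simp [shiftTail]
  have hj0 : shiftTail j n 0 = j n := by simp [shiftTail]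
  have hthr : piE q0 q1 (shiftTail i n) = (q0 - 1) / q0 := by
    cases hikn : i n with
    | false =>
      have hjkn : j n = true := by
        cases hjn : j n
        · exact absurd (hikn.trans hjn.symm) hdiff
        · rfl
      have hle : piE q0 q1 (shiftTail i n) ≤ (q0 - 1) / q0 :=
        piE_false_le h0 h1 hr _ (hi0.trans hikn)
      have hge : (q0 - 1) / q0 ≤ piE q0 q1 (shiftTail j n) :=
        piE_true_ge h0 h1 hr _ (hj0.trans hjkn)
      rw [htails]
      rw [htails] at hle
      linarith
    | true =>
      have hjkn : j n = false := by
        cases hjn : j n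
        · rfl
        · exact absurd (hikn.trans hjn.symm) hdiff
      have hge : (q0 - 1) / q0 ≤ piE q0 q1 (shiftTail i n) :=
        piE_true_ge h0 h1 hr _ (hi0.trans hikn)
      have hle : piE q0 q1 (shiftTail j n) ≤ (q0 - 1) / q0 :=
        piE_false_le h0 h1 hr _ (hj0.trans hjkn)
      rw [← htails] at hle
      linarith
  exact ⟨w, by rw [← hthr, ← h2]⟩

end Stmt5

open Stmt5 in
/-- Theorem 1(iii): if `q₀ > 1` and `q₁ = q₀/(q₀−1)`, then `dim_H 𝒰_{q₀,q₁} = 1`. -/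
theorem stmt5 (q0 q1 : ℝ) (hq0 : 1 < q0) (hq1 : q1 = q0 / (q0 - 1)) :
    dimH (univoque q0 q1) = 1 := by
  have hq0m : (0:ℝ) < q0 - 1 := by linarith
  have h1 : 1 < q1 := by
    rw [hq1, lt_div_iff₀ hq0m]
    linarith
  have hr : (q0 - 1) * q1 = q0 := by
    rw [hq1]
    field_simp
  set E : Set ℝ := Set.range (fun w : List Bool => applyL q0 q1 w ((q0 - 1) / q0)) with hE
  have hEc : E.Countable := Set.countable_range _
  have hsub : Set.Icc (0:ℝ) (q0 - 1) ⊆ univoque q0 q1 ∪ E := by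
    intro x hx
    by_cases hxE : x ∈ E
    · exact Or.inr hxE
    · refine Or.inl ⟨digs q0 q1 x, piE_digs hq0 h1 hr hx, fun j hj => ?_⟩
      by_contra hne
      have hij : piE q0 q1 j = piE q0 q1 (digs q0 q1 x) := by
        rw [hj, piE_digs hq0 h1 hr hx]
      obtain ⟨w, hw⟩ := nonuniq_mem hq0 h1 hr hij hne
      exact hxE ⟨w, by show applyL q0 q1 w ((q0 - 1) / q0) = x; rw [hw]; exact hj⟩
  have hIcc : dimH (Set.Icc (0:ℝ) (q0 - 1)) = 1 := by
    have : dimH (Set.Icc (0:ℝ) (q0 - 1)) = (Module.finrank ℝ ℝ : ℕ∞) := by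
      apply Real.dimH_of_nonempty_interior
      rw [interior_Icc]
      exact ⟨(q0 - 1) / 2, by constructor <;> linarith⟩
    rw [this, Module.finrank_self]
    norm_num
  refine le_antisymm ?_ ?_
  · calc dimH (univoque q0 q1) ≤ dimH (Set.univ : Set ℝ) := dimH_mono (Set.subset_univ _)
      _ = 1 := Real.dimH_univ
  · calc (1:ENNReal) = dimH (Set.Icc (0:ℝ) (q0 - 1)) := hIcc.symm
      _ ≤ dimH (univoque q0 q1 ∪ E) := dimH_mono hsub
      _ = max (dimH (univoque q0 q1)) (dimH E) := dimH_union _ _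
      _ = max (dimH (univoque q0 q1)) 0 := by rw [hEc.dimH_zero]
      _ = dimH (univoque q0 q1) := max_eq_left zero_le
end

section
/- Let q₀ > 1 and q₁ > q₀/(q₀−1). Then there is a unique s > 0 with q₀^{−s} + q₁^{−s} = 1, this s satisfies 0 < s < 1, and dim_H 𝒰_{q₀,q₁} = s. -/
open Filter Topology

open MeasureTheory
open scoped ENNReal NNReal

namespace KL

noncomputable def rhoP (p0 p1 : ℝ) (i : ℕ → Bool) (n : ℕ) : ℝ :=
  ∏ j ∈ Finset.range n, (qb p0 p1 (i j))⁻¹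

noncomputable def valP (p0 p1 : ℝ) (i : ℕ → Bool) (n : ℕ) : ℝ :=
  ∑ k ∈ Finset.range n, (if i k then (1:ℝ) else 0) * rhoP p0 p1 i (k+1)

variable {p0 p1 : ℝ}

lemma one_lt_qb (hp0 : 1 < p0) (hp1 : 1 < p1) (d : Bool) : 1 < qb p0 p1 d := by
  cases d <;> simpa [qb]

lemma qb_pos (hp0 : 1 < p0) (hp1 : 1 < p1) (d : Bool) : 0 < qb p0 p1 d :=
  lt_trans one_pos (one_lt_qb hp0 hp1 d)

lemma rhoP_pos (hp0 : 1 < p0) (hp1 : 1 < p1) (i : ℕ → Bool) (n : ℕ) :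
    0 < rhoP p0 p1 i n :=
  Finset.prod_pos fun j _ => inv_pos.2 (qb_pos hp0 hp1 (i j))

lemma rhoP_succ (i : ℕ → Bool) (n : ℕ) :
    rhoP p0 p1 i (n+1) = rhoP p0 p1 i n * (qb p0 p1 (i n))⁻¹ :=
  Finset.prod_range_succ _ n

lemma rhoP_le_one (hp0 : 1 < p0) (hp1 : 1 < p1) (i : ℕ → Bool) (n : ℕ) :
    rhoP p0 p1 i n ≤ 1 := by
  apply Finset.prod_le_one (fun j _ => (inv_pos.2 (qb_pos hp0 hp1 (i j))).le)
  exact fun j _ => inv_le_one_of_one_le₀ (one_lt_qb hp0 hp1 (i j)).le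

lemma rhoP_le_pow (hp0 : 1 < p0) (hp1 : 1 < p1) (i : ℕ → Bool) (n : ℕ) :
    rhoP p0 p1 i n ≤ (max p0⁻¹ p1⁻¹) ^ n := by
  calc rhoP p0 p1 i n ≤ ∏ _j ∈ Finset.range n, (max p0⁻¹ p1⁻¹) := by
        refine Finset.prod_le_prod (fun j _ => (inv_pos.2 (qb_pos hp0 hp1 (i j))).le) ?_
        intro j _
        cases h : i j <;> simp [qb, le_max_left, le_max_right]
    _ = (max p0⁻¹ p1⁻¹) ^ n := by rw [Finset.prod_const, Finset.card_range]

lemma theta_nonneg (hp0 : 1 < p0) (hp1 : 1 < p1) : 0 ≤ max p0⁻¹ p1⁻¹ :=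
  le_trans (inv_pos.2 (lt_trans one_pos hp0)).le (le_max_left _ _)

lemma theta_lt_one (hp0 : 1 < p0) (hp1 : 1 < p1) : max p0⁻¹ p1⁻¹ < 1 :=
  max_lt (inv_lt_one_of_one_lt₀ hp0) (inv_lt_one_of_one_lt₀ hp1)

lemma rhoP_tendsto (hp0 : 1 < p0) (hp1 : 1 < p1) (i : ℕ → Bool) :
    Tendsto (fun n => rhoP p0 p1 i n) atTop (𝓝 0) := by
  have h := tendsto_pow_atTop_nhds_zero_of_lt_one (theta_nonneg hp0 hp1) (theta_lt_one hp0 hp1)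
  refine squeeze_zero (fun n => (rhoP_pos hp0 hp1 i n).le) (fun n => rhoP_le_pow hp0 hp1 i n) h

lemma summable_term (hp0 : 1 < p0) (hp1 : 1 < p1) (i : ℕ → Bool) :
    Summable (fun k => (if i k then (1:ℝ) else 0) * rhoP p0 p1 i (k+1)) := by
  have hg : Summable (fun k : ℕ => (max p0⁻¹ p1⁻¹) ^ (k+1)) := by
    simpa [pow_succ'] using
      (summable_geometric_of_lt_one (theta_nonneg hp0 hp1) (theta_lt_one hp0 hp1)).mul_left
        (max p0⁻¹ p1⁻¹)
  refine Summable.of_nonneg_of_le (fun k => ?_) (fun k => ?_) hg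
  · have := (rhoP_pos hp0 hp1 i (k+1)).le
    cases h : i k <;> simp [this]
  · have h1 := rhoP_le_pow hp0 hp1 i (k+1)
    have h2 := (rhoP_pos hp0 hp1 i (k+1)).le
    have h3 : (0:ℝ) ≤ (max p0⁻¹ p1⁻¹) ^ (k+1) := le_trans h2 h1
    cases h : i k <;> simp [h1, h2, h3]

lemma piE_eq_tsum (hp0 : 1 < p0) (hp1 : 1 < p1) (i : ℕ → Bool) :
    piE p0 p1 i = ∑' k, (if i k then (1:ℝ) else 0) * rhoP p0 p1 i (k+1) := by
  unfold piE
  congr 1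
  funext k
  rw [div_eq_mul_inv, rhoP, ← Finset.prod_inv_distrib]

lemma tendsto_valP (hp0 : 1 < p0) (hp1 : 1 < p1) (i : ℕ → Bool) :
    Tendsto (fun n => valP p0 p1 i n) atTop (𝓝 (piE p0 p1 i)) := by
  rw [piE_eq_tsum hp0 hp1]
  exact (summable_term hp0 hp1 i).hasSum.tendsto_sum_nat

lemma rhoP_add (i : ℕ → Bool) (n m : ℕ) :
    rhoP p0 p1 i (n + m) = rhoP p0 p1 i n * rhoP p0 p1 (shiftTail i n) m := by
  unfold rhoP shiftTail
  rw [Finset.prod_range_add]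

lemma valP_succ (i : ℕ → Bool) (n : ℕ) :
    valP p0 p1 i (n+1) = valP p0 p1 i n + (if i n then (1:ℝ) else 0) * rhoP p0 p1 i (n+1) :=
  Finset.sum_range_succ _ n

lemma piE_decomp (hp0 : 1 < p0) (hp1 : 1 < p1) (i : ℕ → Bool) (n : ℕ) :
    piE p0 p1 i = valP p0 p1 i n + rhoP p0 p1 i n * piE p0 p1 (shiftTail i n) := by
  rw [piE_eq_tsum hp0 hp1, piE_eq_tsum hp0 hp1,
    ← Summable.sum_add_tsum_nat_add n (summable_term hp0 hp1 i)]
  congr 1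
  rw [← tsum_mul_left]
  congr 1
  funext k
  show (if i (k+n) = true then (1:ℝ) else 0) * rhoP p0 p1 i (k+n+1)
      = rhoP p0 p1 i n *
        ((if shiftTail i n k = true then (1:ℝ) else 0) * rhoP p0 p1 (shiftTail i n) (k+1))
  have h2 : shiftTail i n k = i (k + n) := by simp [shiftTail, add_comm]
  rw [h2, show k + n + 1 = n + (k+1) from by ring, rhoP_add]
  ring

lemma piE_nonneg (hp0 : 1 < p0) (hp1 : 1 < p1) (i : ℕ → Bool) : 0 ≤ piE p0 p1 i := by
  rw [piE_eq_tsum hp0 hp1]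
  refine tsum_nonneg fun k => ?_
  have := (rhoP_pos hp0 hp1 i (k+1)).le
  cases h : i k <;> simp [this]

lemma valP_add_rhoP_le (hp0 : 1 < p0) (hp1 : 1 < p1) (i : ℕ → Bool) (n : ℕ) :
    valP p0 p1 i n + rhoP p0 p1 i n * (p1 - 1)⁻¹ ≤ (p1 - 1)⁻¹ := by
  induction n with
  | zero => simp [valP, rhoP]
  | succ n ih =>
      refine le_trans ?_ ih
      rw [valP_succ, rhoP_succ]
      have hρ := (rhoP_pos hp0 hp1 i n).le
      cases h : i n
      · simp only [qb, Bool.false_eq_true, if_false, zero_mul, add_zero]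
        have h1 : (0:ℝ) < p0⁻¹ := inv_pos.2 (by linarith)
        have h2 : p0⁻¹ ≤ 1 := inv_le_one_of_one_le₀ hp0.le
        have hL : (0:ℝ) ≤ (p1-1)⁻¹ := inv_nonneg.2 (by linarith)
        nlinarith [mul_nonneg (mul_nonneg hρ hL) (sub_nonneg.2 h2)]
      · norm_num [qb]
        apply le_of_eq
        have hq1 : p1 - 1 ≠ 0 := by intro h'; linarith
        have hp1ne : p1 ≠ 0 := by intro h'; linarith
        have key : p1⁻¹ + p1⁻¹ * (p1-1)⁻¹ = (p1-1)⁻¹ := by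
          field_simp
          ring
        linear_combination (rhoP p0 p1 i n) * key

lemma valP_le_L (hp0 : 1 < p0) (hp1 : 1 < p1) (i : ℕ → Bool) (n : ℕ) :
    valP p0 p1 i n ≤ (p1 - 1)⁻¹ := by
  have h := valP_add_rhoP_le hp0 hp1 i n
  have hρ := (rhoP_pos hp0 hp1 i n).le
  have hL : (0:ℝ) ≤ (p1 - 1)⁻¹ := inv_nonneg.2 (by linarith)
  nlinarith

lemma piE_le_L (hp0 : 1 < p0) (hp1 : 1 < p1) (i : ℕ → Bool) :
    piE p0 p1 i ≤ (p1 - 1)⁻¹ :=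
  le_of_tendsto' (tendsto_valP hp0 hp1 i) (valP_le_L hp0 hp1 i)

lemma valP_le_piE (hp0 : 1 < p0) (hp1 : 1 < p1) (i : ℕ → Bool) (n : ℕ) :
    valP p0 p1 i n ≤ piE p0 p1 i := by
  rw [piE_decomp hp0 hp1 i n]
  have := mul_nonneg (rhoP_pos hp0 hp1 i n).le (piE_nonneg hp0 hp1 (shiftTail i n))
  linarith

lemma piE_le_valP_add (hp0 : 1 < p0) (hp1 : 1 < p1) (i : ℕ → Bool) (n : ℕ) :
    piE p0 p1 i ≤ valP p0 p1 i n + rhoP p0 p1 i n * (p1 - 1)⁻¹ := by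
  rw [piE_decomp hp0 hp1 i n]
  have := mul_le_mul_of_nonneg_left (piE_le_L hp0 hp1 (shiftTail i n))
    (rhoP_pos hp0 hp1 i n).le
  linarith

lemma rhoP_congr {i j : ℕ → Bool} {n : ℕ} (h : ∀ k < n, i k = j k) :
    rhoP p0 p1 i n = rhoP p0 p1 j n := by
  unfold rhoP
  exact Finset.prod_congr rfl fun k hk => by rw [h k (Finset.mem_range.1 hk)]

lemma valP_congr {i j : ℕ → Bool} {n : ℕ} (h : ∀ k < n, i k = j k) :
    valP p0 p1 i n = valP p0 p1 j n := by
  unfold valP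
  refine Finset.sum_congr rfl fun k hk => ?_
  have hk' := Finset.mem_range.1 hk
  rw [h k hk', rhoP_congr (fun m hm => h m (lt_of_lt_of_le hm hk'))]

/-- Separation: if `i` and `j` agree below `n`, `i n = false`, `j n = true`, then
`piE j - piE i ≥ g * rhoP i n` where `g = 1/p1 - L/p0`. -/
lemma piE_sep (hp0 : 1 < p0) (hp1 : 1 < p1) {i j : ℕ → Bool} {n : ℕ}
    (hpref : ∀ k < n, i k = j k) (hi : i n = false) (hj : j n = true) :
    piE p0 p1 i + (1/p1 - (p1-1)⁻¹/p0) * rhoP p0 p1 i n ≤ piE p0 p1 j := by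
  have hvi : valP p0 p1 i n = valP p0 p1 j n := valP_congr hpref
  have hri : rhoP p0 p1 i n = rhoP p0 p1 j n := rhoP_congr hpref
  have h1 : piE p0 p1 i ≤ valP p0 p1 i n + rhoP p0 p1 i n * (p0⁻¹ * (p1-1)⁻¹) := by
    have := piE_le_valP_add hp0 hp1 i (n+1)
    rw [valP_succ, rhoP_succ, hi] at this
    simpa [qb, mul_assoc] using this
  have h2 : valP p0 p1 j n + rhoP p0 p1 j n * p1⁻¹ ≤ piE p0 p1 j := by
    have := valP_le_piE hp0 hp1 j (n+1)
    rw [valP_succ, rhoP_succ, hj] at this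
    simpa [qb, mul_assoc] using this
  rw [hvi, hri] at h1
  have expand : (1/p1 - (p1-1)⁻¹/p0) * rhoP p0 p1 i n
      = rhoP p0 p1 j n * p1⁻¹ - rhoP p0 p1 j n * (p0⁻¹ * (p1-1)⁻¹) := by
    rw [← hri]; field_simp
  linarith

/-- Quantitative separation at the first disagreement. -/
lemma piE_dist (hp0 : 1 < p0) (hp1 : 1 < p1) (hgap : (p1-1)⁻¹/p0 < 1/p1)
    {i j : ℕ → Bool} {n : ℕ}
    (hpref : ∀ k < n, i k = j k) (hne : i n ≠ j n) :
    (1/p1 - (p1-1)⁻¹/p0) * rhoP p0 p1 i n ≤ |piE p0 p1 i - piE p0 p1 j| := by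
  cases hi : i n
  · have hj : j n = true := by
      cases hj : j n
      · exact absurd (hi.trans hj.symm) hne
      · rfl
    have := piE_sep hp0 hp1 hpref hi hj
    have hg : 0 ≤ (1/p1 - (p1-1)⁻¹/p0) * rhoP p0 p1 i n :=
      mul_nonneg (by linarith) (rhoP_pos hp0 hp1 i n).le
    rw [abs_sub_comm, abs_of_nonneg (by linarith)]
    linarith
  · have hj : j n = false := by
      cases hj : j n
      · rfl
      · exact absurd (hi.trans hj.symm) hne
    have := piE_sep hp0 hp1 (fun k hk => (hpref k hk).symm) hj hi
    have hg : 0 ≤ (1/p1 - (p1-1)⁻¹/p0) * rhoP p0 p1 j n :=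
      mul_nonneg (by linarith) (rhoP_pos hp0 hp1 j n).le
    rw [rhoP_congr (fun k hk => hpref k hk), abs_of_nonneg (by linarith)]
    linarith

lemma piE_injective (hp0 : 1 < p0) (hp1 : 1 < p1)
    (hgap : (p1-1)⁻¹/p0 < 1/p1) : Function.Injective (piE p0 p1) := by
  intro i j hij
  by_contra hne
  have hex : ∃ n, i n ≠ j n := by
    by_contra h
    push_neg at h
    exact hne (funext h)
  classical
  let n := Nat.find hex
  have hn : i n ≠ j n := Nat.find_spec hex
  have hpref : ∀ k < n, i k = j k := fun k hk => by
    have := Nat.find_min hex hk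
    simpa using this
  have := piE_dist hp0 hp1 hgap hpref hn
  rw [hij, sub_self, abs_zero] at this
  have hg : 0 < 1/p1 - (p1-1)⁻¹/p0 := by linarith
  nlinarith [rhoP_pos hp0 hp1 i n, mul_pos hg (rhoP_pos hp0 hp1 i n)]

noncomputable def gOrb (p0 p1 : ℝ) (x : ℝ) : ℕ → ℝ
  | 0 => x
  | n+1 => if 1/p1 ≤ gOrb p0 p1 x n then p1 * gOrb p0 p1 x n - 1 else p0 * gOrb p0 p1 x n

noncomputable def gDig (p0 p1 : ℝ) (x : ℝ) (n : ℕ) : Bool := decide (1/p1 ≤ gOrb p0 p1 x n)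

lemma gOrb_mem (hp0 : 1 < p0) (hp1 : 1 < p1) (hsum : 1/p0 + 1/p1 = 1) {x : ℝ}
    (hx : x ∈ Set.Icc (0:ℝ) (p1-1)⁻¹) (n : ℕ) :
    gOrb p0 p1 x n ∈ Set.Icc (0:ℝ) (p1-1)⁻¹ := by
  have hp0' : (0:ℝ) < p0 := by linarith
  have hp1' : (0:ℝ) < p1 := by linarith
  have hd : (0:ℝ) < p1 - 1 := by linarith
  have hpp : p0 + p1 = p0 * p1 := by
    field_simp at hsum
    linarith
  have hLid : p1 * (p1-1)⁻¹ = (p1-1)⁻¹ + 1 := by field_simp; ring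
  have hp0L : p0 * (1/p1) = (p1-1)⁻¹ := by
    field_simp
    nlinarith
  have h11 : p1 * (1/p1) = 1 := by field_simp
  induction n with
  | zero => exact hx
  | succ n ih =>
      obtain ⟨h0, hL⟩ := ih
      show (if 1/p1 ≤ gOrb p0 p1 x n then p1 * gOrb p0 p1 x n - 1 else p0 * gOrb p0 p1 x n)
        ∈ Set.Icc (0:ℝ) (p1-1)⁻¹
      split_ifs with h
      · constructor
        · have := mul_le_mul_of_nonneg_left h hp1'.le
          rw [h11] at this
          simpa using by linarith
        · have := mul_le_mul_of_nonneg_left hL hp1'.le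
          rw [hLid] at this
          simpa using by linarith
      · push_neg at h
        constructor
        · exact mul_nonneg hp0'.le h0
        · have := mul_le_mul_of_nonneg_left h.le hp0'.le
          rw [hp0L] at this
          simpa using this

lemma gOrb_identity (hp0 : 1 < p0) (hp1 : 1 < p1) (x : ℝ) (n : ℕ) :
    x = valP p0 p1 (gDig p0 p1 x) n + rhoP p0 p1 (gDig p0 p1 x) n * gOrb p0 p1 x n := by
  have hp0' : (0:ℝ) < p0 := by linarith
  have hp1' : (0:ℝ) < p1 := by linarith
  induction n with
  | zero => simp [valP, rhoP, gOrb]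
  | succ n ih =>
      rw [valP_succ, rhoP_succ]
      by_cases h : 1/p1 ≤ gOrb p0 p1 x n
      · have hdig : gDig p0 p1 x n = true := decide_eq_true h
        have horb : gOrb p0 p1 x (n+1) = p1 * gOrb p0 p1 x n - 1 := by
          rw [gOrb, if_pos h]
        rw [hdig, horb]
        norm_num [qb]
        have hinv : p1⁻¹ * p1 = 1 := inv_mul_cancel₀ (ne_of_gt hp1')
        linear_combination ih - (rhoP p0 p1 (gDig p0 p1 x) n * gOrb p0 p1 x n) * hinv
      · have hdig : gDig p0 p1 x n = false := decide_eq_false h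
        have horb : gOrb p0 p1 x (n+1) = p0 * gOrb p0 p1 x n := by
          rw [gOrb, if_neg h]
        rw [hdig, horb]
        norm_num [qb]
        have hinv : p0⁻¹ * p0 = 1 := inv_mul_cancel₀ (ne_of_gt hp0')
        linear_combination ih - (rhoP p0 p1 (gDig p0 p1 x) n * gOrb p0 p1 x n) * hinv

lemma piE_surj (hp0 : 1 < p0) (hp1 : 1 < p1) (hsum : 1/p0 + 1/p1 = 1) {x : ℝ}
    (hx : x ∈ Set.Icc (0:ℝ) (p1-1)⁻¹) : ∃ i, piE p0 p1 i = x := by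
  refine ⟨gDig p0 p1 x, ?_⟩
  have hdiff : ∀ n, ‖valP p0 p1 (gDig p0 p1 x) n - x‖ ≤ rhoP p0 p1 (gDig p0 p1 x) n * (p1-1)⁻¹ := by
    intro n
    have hid := gOrb_identity hp0 hp1 x n
    have hmem := gOrb_mem hp0 hp1 hsum hx n
    have hρ := (rhoP_pos hp0 hp1 (gDig p0 p1 x) n).le
    rw [Real.norm_eq_abs, abs_le]
    constructor
    · nlinarith [mul_le_mul_of_nonneg_left hmem.2 hρ, mul_nonneg hρ hmem.1]
    · nlinarith [mul_le_mul_of_nonneg_left hmem.2 hρ, mul_nonneg hρ hmem.1]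
  have hg : Tendsto (fun n => rhoP p0 p1 (gDig p0 p1 x) n * (p1-1)⁻¹) atTop (𝓝 0) := by
    simpa using (rhoP_tendsto hp0 hp1 (gDig p0 p1 x)).mul_const (p1-1)⁻¹
  have h0 : Tendsto (fun n => valP p0 p1 (gDig p0 p1 x) n - x) atTop (𝓝 0) :=
    squeeze_zero_norm hdiff hg
  have htend : Tendsto (fun n => valP p0 p1 (gDig p0 p1 x) n) atTop (𝓝 x) := by
    simpa using h0.add_const x
  exact tendsto_nhds_unique (tendsto_valP hp0 hp1 _) htend

def cylSet (j : ℕ → Bool) (n : ℕ) : Set (ℕ → Bool) := {i | ∀ k, k < n → i k = j k}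

/-- Superadditivity of cylinder masses over covers of the full shift, in the "touching"
case `1/p0 + 1/p1 = 1`, proved via Lebesgue measure and surjectivity of `piE`. -/
lemma cover_mass (hp0 : 1 < p0) (hp1 : 1 < p1) (hsum : 1/p0 + 1/p1 = 1)
    (j : ℕ → ℕ → Bool) (m : ℕ → ℕ)
    (hcov : ∀ i : ℕ → Bool, ∃ n, i ∈ cylSet (j n) (m n)) :
    (1:ℝ≥0∞) ≤ ∑' n, ENNReal.ofReal (rhoP p0 p1 (j n) (m n)) := by
  have hd : (0:ℝ) < p1 - 1 := by linarith
  have hL : (0:ℝ) < (p1-1)⁻¹ := inv_pos.2 hd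
  have hIcc : Set.Icc (0:ℝ) (p1-1)⁻¹ ⊆
      ⋃ n, Set.Icc (valP p0 p1 (j n) (m n))
        (valP p0 p1 (j n) (m n) + rhoP p0 p1 (j n) (m n) * (p1-1)⁻¹) := by
    intro x hx
    obtain ⟨i, rfl⟩ := piE_surj hp0 hp1 hsum hx
    obtain ⟨n, hn⟩ := hcov i
    refine Set.mem_iUnion.2 ⟨n, ?_, ?_⟩
    · rw [← valP_congr hn]
      exact valP_le_piE hp0 hp1 i (m n)
    · rw [← valP_congr hn, ← rhoP_congr hn]
      exact piE_le_valP_add hp0 hp1 i (m n)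
  have hvol : ENNReal.ofReal ((p1-1)⁻¹) ≤
      ∑' n, ENNReal.ofReal (rhoP p0 p1 (j n) (m n)) * ENNReal.ofReal ((p1-1)⁻¹) := by
    calc ENNReal.ofReal ((p1-1)⁻¹)
        = MeasureTheory.volume (Set.Icc (0:ℝ) (p1-1)⁻¹) := by
          rw [Real.volume_Icc]; norm_num
      _ ≤ MeasureTheory.volume (⋃ n, Set.Icc (valP p0 p1 (j n) (m n))
            (valP p0 p1 (j n) (m n) + rhoP p0 p1 (j n) (m n) * (p1-1)⁻¹)) :=
          MeasureTheory.measure_mono hIcc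
      _ ≤ ∑' n, MeasureTheory.volume (Set.Icc (valP p0 p1 (j n) (m n))
            (valP p0 p1 (j n) (m n) + rhoP p0 p1 (j n) (m n) * (p1-1)⁻¹)) :=
          MeasureTheory.measure_iUnion_le _
      _ = ∑' n, ENNReal.ofReal (rhoP p0 p1 (j n) (m n)) * ENNReal.ofReal ((p1-1)⁻¹) := by
          congr 1
          funext n
          rw [Real.volume_Icc]
          rw [add_sub_cancel_left]
          rw [ENNReal.ofReal_mul (rhoP_pos hp0 hp1 (j n) (m n)).le]
  rw [ENNReal.tsum_mul_right] at hvol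
  have h0 : ENNReal.ofReal ((p1-1)⁻¹) ≠ 0 := ne_of_gt (ENNReal.ofReal_pos.2 hL)
  have htop : ENNReal.ofReal ((p1-1)⁻¹) ≠ ⊤ := ENNReal.ofReal_ne_top
  have h1 : (1:ℝ≥0∞) * ENNReal.ofReal ((p1-1)⁻¹) ≤
      (∑' n, ENNReal.ofReal (rhoP p0 p1 (j n) (m n))) * ENNReal.ofReal ((p1-1)⁻¹) := by
    rw [one_mul]; exact hvol
  exact (ENNReal.mul_le_mul_iff_left h0 htop).1 h1

/-- Stopping-time lemma: for a set of diameter at most `d > 0`, all `piE`-preimages lie in a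
single cylinder of mass at most `d/g`. -/
lemma preimage_subset_cyl (hp0 : 1 < p0) (hp1 : 1 < p1)
    (hgap : (p1-1)⁻¹/p0 < 1/p1) (t : Set ℝ) (d : ℝ) (hdpos : 0 < d)
    (hdiam : ∀ x ∈ t, ∀ y ∈ t, |x - y| ≤ d) (i : ℕ → Bool) (hi : piE p0 p1 i ∈ t) :
    ∃ M, (∀ jj, piE p0 p1 jj ∈ t → jj ∈ cylSet i M) ∧
      rhoP p0 p1 i M ≤ d / (1/p1 - (p1-1)⁻¹/p0) := by
  classical
  set g : ℝ := 1/p1 - (p1-1)⁻¹/p0 with hgdef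
  have hg : 0 < g := by simp only [hgdef]; linarith
  have hex : ∃ M, rhoP p0 p1 i M ≤ d / g := by
    have := rhoP_tendsto hp0 hp1 i
    have hpos : 0 < d / g := div_pos hdpos hg
    rcases (this.eventually (eventually_le_nhds hpos)).exists with ⟨M, hM⟩
    exact ⟨M, hM⟩
  refine ⟨Nat.find hex, ?_, Nat.find_spec hex⟩
  intro jj hjj
  by_contra hnot
  have hexk : ∃ k, jj k ≠ i k := by
    by_contra hall
    push_neg at hall
    exact hnot fun k _ => hall k
  set k0 := Nat.find hexk with hk0
  have hk0ne : jj k0 ≠ i k0 := Nat.find_spec hexk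
  have hk0pref : ∀ k, k < k0 → jj k = i k := fun k hk => by
    have := Nat.find_min hexk hk
    simpa using this
  have hk0lt : k0 < Nat.find hex := by
    by_contra hge
    push_neg at hge
    exact hnot fun k hk => hk0pref k (lt_of_lt_of_le hk hge)
  have hbig : d / g < rhoP p0 p1 i k0 := by
    have := Nat.find_min hex hk0lt
    linarith [lt_of_not_ge this]
  have hdist := piE_dist hp0 hp1 hgap (fun k hk => (hk0pref k hk).symm)
    (fun h => hk0ne h.symm)
  have hle := hdiam _ hi _ hjj
  have : g * rhoP p0 p1 i k0 ≤ d := le_trans hdist hle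
  have : g * (d / g) < g * rhoP p0 p1 i k0 := by
    exact (mul_lt_mul_iff_right₀ hg).2 hbig
  rw [mul_div_cancel₀ _ (ne_of_gt hg)] at this
  linarith

lemma sum_prod_words (f : Bool → ℝ) (n : ℕ) :
    ∑ v : Fin n → Bool, ∏ k : Fin n, f (v k) = (f false + f true)^n := by
  have h := Finset.prod_univ_sum (fun _ : Fin n => (Finset.univ : Finset Bool)) (fun _ b => f b)
  simp only [Fintype.piFinset_univ] at h
  rw [← h]
  simp [Fintype.sum_bool, Finset.prod_const, add_comm]

lemma qb_rpow (hp0 : 1 < p0) (hp1 : 1 < p1) (s : ℝ) (d : Bool) :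
    qb (p0 ^ s) (p1 ^ s) d = (qb p0 p1 d) ^ s := by
  cases d <;> rfl

lemma rhoP_rpow (hp0 : 1 < p0) (hp1 : 1 < p1) (s : ℝ) (i : ℕ → Bool) (n : ℕ) :
    rhoP (p0 ^ s) (p1 ^ s) i n = (rhoP p0 p1 i n) ^ s := by
  unfold rhoP
  rw [← Real.finset_prod_rpow _ _ (fun k _ => (inv_pos.2 (qb_pos hp0 hp1 (i k))).le)]
  refine Finset.prod_congr rfl fun k _ => ?_
  have hq := (qb_pos hp0 hp1 (i k)).le
  have hqs : (0:ℝ) ≤ qb p0 p1 (i k) ^ s := Real.rpow_nonneg hq s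
  rw [qb_rpow hp0 hp1, ← Real.rpow_neg_one, ← Real.rpow_neg_one, ← Real.rpow_mul hq,
    ← Real.rpow_mul hq, mul_comm]

lemma image_cyl_subset_Icc (hp0 : 1 < p0) (hp1 : 1 < p1) (w : ℕ → Bool) (n : ℕ) :
    piE p0 p1 '' cylSet w n ⊆
      Set.Icc (valP p0 p1 w n) (valP p0 p1 w n + rhoP p0 p1 w n * (p1-1)⁻¹) := by
  rintro x ⟨i, hi, rfl⟩
  constructor
  · rw [← valP_congr hi]
    exact valP_le_piE hp0 hp1 i n
  · rw [← valP_congr hi, ← rhoP_congr hi]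
    exact piE_le_valP_add hp0 hp1 i n

lemma ediam_image_cyl (hp0 : 1 < p0) (hp1 : 1 < p1) (w : ℕ → Bool) (n : ℕ) :
    EMetric.diam (piE p0 p1 '' cylSet w n) ≤
      ENNReal.ofReal (rhoP p0 p1 w n * (p1-1)⁻¹) := by
  refine le_trans (EMetric.diam_mono (image_cyl_subset_Icc hp0 hp1 w n)) ?_
  rw [Real.ediam_Icc, add_sub_cancel_left]

set_option maxHeartbeats 1000000 in
/-- The sum of `s`-masses of level-`n` cylinders equals 1 when `q0^(-s)+q1^(-s)=1`. -/
lemma sum_rho_ext (hp0 : 1 < p0) (hp1 : 1 < p1) {s : ℝ}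
    (heq : p0 ^ (-s) + p1 ^ (-s) = 1) (n : ℕ) :
    ∑ v : Fin n → Bool,
      rhoP (p0 ^ s) (p1 ^ s) (fun k => if h : k < n then v ⟨k, h⟩ else false) n = 1 := by
  have hrw : ∀ v : Fin n → Bool,
      rhoP (p0 ^ s) (p1 ^ s) (fun k => if h : k < n then v ⟨k, h⟩ else false) n
        = ∏ k : Fin n, (qb (p0 ^ s) (p1 ^ s) (v k))⁻¹ := by
    intro v
    rw [rhoP, ← Fin.prod_univ_eq_prod_range
      (fun j => (qb (p0 ^ s) (p1 ^ s) (if h : j < n then v ⟨j, h⟩ else false))⁻¹) n]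
    exact Finset.prod_congr rfl fun k _ => by rw [dif_pos k.2]
  have h0 : (qb (p0 ^ s) (p1 ^ s) false)⁻¹ = p0 ^ (-s) := by
    rw [qb_rpow hp0 hp1]
    rw [show qb p0 p1 false = p0 from rfl, ← Real.rpow_neg (by linarith)]
  have h1 : (qb (p0 ^ s) (p1 ^ s) true)⁻¹ = p1 ^ (-s) := by
    rw [qb_rpow hp0 hp1]
    rw [show qb p0 p1 true = p1 from rfl, ← Real.rpow_neg (by linarith)]
  calc ∑ v : Fin n → Bool,
        rhoP (p0 ^ s) (p1 ^ s) (fun k => if h : k < n then v ⟨k, h⟩ else false) n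
      = ∑ v : Fin n → Bool, ∏ k : Fin n, (qb (p0 ^ s) (p1 ^ s) (v k))⁻¹ :=
        Finset.sum_congr rfl fun v _ => hrw v
    _ = ((qb (p0 ^ s) (p1 ^ s) false)⁻¹ + (qb (p0 ^ s) (p1 ^ s) true)⁻¹)^n :=
        sum_prod_words (fun b => (qb (p0 ^ s) (p1 ^ s) b)⁻¹) n
    _ = 1 := by rw [h0, h1, heq, one_pow]

lemma upper_bound (hp0 : 1 < p0) (hp1 : 1 < p1) {s : ℝ} (hs : 0 < s)
    (heq : p0 ^ (-s) + p1 ^ (-s) = 1) :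
    μH[s] (Set.range (piE p0 p1)) ≤ ENNReal.ofReal ((p1-1)⁻¹ ^ s) := by
  have hL : (0:ℝ) < (p1-1)⁻¹ := inv_pos.2 (by linarith)
  have hθ0 := theta_nonneg hp0 hp1
  have hθ1 := theta_lt_one hp0 hp1
  have hr : Tendsto (fun n : ℕ => ENNReal.ofReal ((p1-1)⁻¹ * (max p0⁻¹ p1⁻¹)^n)) atTop (𝓝 0) := by
    have h1 : Tendsto (fun n : ℕ => (p1-1)⁻¹ * (max p0⁻¹ p1⁻¹)^n) atTop (𝓝 0) := by
      simpa using (tendsto_pow_atTop_nhds_zero_of_lt_one hθ0 hθ1).const_mul ((p1-1)⁻¹)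
    have := (ENNReal.continuous_ofReal.tendsto 0).comp h1
    simpa [Function.comp_def] using this
  have hmain := Measure.hausdorffMeasure_le_liminf_sum (ι := fun n : ℕ => Fin n → Bool) s (Set.range (piE p0 p1))
    (fun n => ENNReal.ofReal ((p1-1)⁻¹ * (max p0⁻¹ p1⁻¹)^n)) hr
    (fun n v => piE p0 p1 '' cylSet (fun k => if h : k < n then v ⟨k, h⟩ else false) n)
    ?_ ?_
  · refine le_trans hmain ?_
    refine liminf_le_of_frequently_le (Frequently.of_forall fun n => ?_)
    set ext : (Fin n → Bool) → (ℕ → Bool) :=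
      fun v k => if h : k < n then v ⟨k, h⟩ else false with hext
    have hterm : ∀ v : Fin n → Bool,
        EMetric.diam (piE p0 p1 '' cylSet (ext v) n) ^ s
          ≤ ENNReal.ofReal ((p1-1)⁻¹ ^ s * rhoP (p0 ^ s) (p1 ^ s) (ext v) n) := by
      intro v
      have h1 := ediam_image_cyl hp0 hp1 (ext v) n
      have h2 := ENNReal.rpow_le_rpow h1 hs.le
      refine le_trans h2 ?_
      have hρ := rhoP_pos hp0 hp1 (ext v) n
      rw [ENNReal.ofReal_rpow_of_pos (mul_pos hρ hL)]
      apply ENNReal.ofReal_le_ofReal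
      rw [Real.mul_rpow hρ.le hL.le, rhoP_rpow hp0 hp1]
      exact le_of_eq (mul_comm _ _)
    calc ∑ v : Fin n → Bool, EMetric.diam (piE p0 p1 '' cylSet (ext v) n) ^ s
        ≤ ∑ v : Fin n → Bool,
            ENNReal.ofReal ((p1-1)⁻¹ ^ s * rhoP (p0 ^ s) (p1 ^ s) (ext v) n) :=
          Finset.sum_le_sum fun v _ => hterm v
      _ = ENNReal.ofReal (∑ v : Fin n → Bool,
            (p1-1)⁻¹ ^ s * rhoP (p0 ^ s) (p1 ^ s) (ext v) n) := by
          rw [ENNReal.ofReal_sum_of_nonneg]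
          intro v _
          have hr0 : (1:ℝ) < p0 ^ s :=
            (Real.one_lt_rpow_iff_of_pos (by linarith)).2 (Or.inl ⟨hp0, hs⟩)
          have hr1 : (1:ℝ) < p1 ^ s :=
            (Real.one_lt_rpow_iff_of_pos (by linarith)).2 (Or.inl ⟨hp1, hs⟩)
          exact mul_nonneg (Real.rpow_nonneg hL.le s) (rhoP_pos hr0 hr1 _ n).le
      _ = ENNReal.ofReal ((p1-1)⁻¹ ^ s) := by
          rw [← Finset.mul_sum, sum_rho_ext hp0 hp1 heq n, mul_one]
  · refine Filter.Eventually.of_forall fun n => fun v => ?_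
    refine le_trans (ediam_image_cyl hp0 hp1 _ n) (ENNReal.ofReal_le_ofReal ?_)
    rw [mul_comm ((p1-1)⁻¹)]
    exact mul_le_mul_of_nonneg_right (rhoP_le_pow hp0 hp1 _ n) hL.le
  · refine Filter.Eventually.of_forall fun n => ?_
    rintro x ⟨i, rfl⟩
    refine Set.mem_iUnion.2 ⟨fun k => i k, Set.mem_image_of_mem _ ?_⟩
    intro k hk
    simp [hk]

set_option maxHeartbeats 1000000 in
/-- Mass distribution lower bound for the Hausdorff measure of the attractor. -/
lemma lower_bound (hp0 : 1 < p0) (hp1 : 1 < p1) (hgap : (p1-1)⁻¹/p0 < 1/p1) {s : ℝ}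
    (hs : 0 < s) (heq : p0 ^ (-s) + p1 ^ (-s) = 1) :
    ENNReal.ofReal ((1/p1 - (p1-1)⁻¹/p0) ^ s) * 2⁻¹ ≤ μH[s] (Set.range (piE p0 p1)) := by
  classical
  set g : ℝ := 1/p1 - (p1-1)⁻¹/p0 with hgdef
  have hg : 0 < g := by simp only [hgdef]; linarith
  set Cg : ℝ≥0∞ := ENNReal.ofReal (g ^ s) with hCgdef
  have hCg0 : Cg ≠ 0 := ne_of_gt (ENNReal.ofReal_pos.2 (Real.rpow_pos_of_pos hg s))
  have hCgtop : Cg ≠ ⊤ := ENNReal.ofReal_ne_top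
  have hr0 : (1:ℝ) < p0 ^ s := (Real.one_lt_rpow_iff_of_pos (by linarith)).2 (Or.inl ⟨hp0, hs⟩)
  have hr1 : (1:ℝ) < p1 ^ s := (Real.one_lt_rpow_iff_of_pos (by linarith)).2 (Or.inl ⟨hp1, hs⟩)
  have hrsum : 1/(p0 ^ s) + 1/(p1 ^ s) = 1 := by
    rw [one_div, one_div, ← Real.rpow_neg (by linarith : (0:ℝ) ≤ p0),
      ← Real.rpow_neg (by linarith : (0:ℝ) ≤ p1)]
    exact heq
  have key : ∀ t : ℕ → Set ℝ, (Set.range (piE p0 p1) ⊆ ⋃ n, t n) →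
      Cg * 2⁻¹ ≤ ∑' n, ⨆ _ : (t n).Nonempty, EMetric.diam (t n) ^ s := by
    intro t hcovt
    have hchoice : ∀ n : ℕ, ∃ (jf : ℕ → Bool) (mf : ℕ),
        (∀ jj : ℕ → Bool, piE p0 p1 jj ∈ t n → jj ∈ cylSet jf mf) ∧
        ENNReal.ofReal (rhoP (p0 ^ s) (p1 ^ s) jf mf) ≤
          (⨆ _ : (t n).Nonempty, EMetric.diam (t n) ^ s) * Cg⁻¹ + (2⁻¹ : ℝ≥0∞) ^ (n+2) := by
      intro n
      have hdeep : ∀ i : ℕ → Bool, ∃ M : ℕ,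
          ENNReal.ofReal (rhoP (p0 ^ s) (p1 ^ s) i M) ≤ (2⁻¹ : ℝ≥0∞) ^ (n+2) := by
        intro i
        obtain ⟨M, hM⟩ := ((rhoP_tendsto hr0 hr1 i).eventually
          (eventually_le_nhds (by positivity : (0:ℝ) < (2⁻¹:ℝ)^(n+2)))).exists
        refine ⟨M, le_trans (ENNReal.ofReal_le_ofReal hM) ?_⟩
        rw [ENNReal.ofReal_pow (by norm_num : (0:ℝ) ≤ 2⁻¹),
          ENNReal.ofReal_inv_of_pos (by norm_num : (0:ℝ) < 2), ENNReal.ofReal_ofNat]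
      by_cases hpre : ∃ i : ℕ → Bool, piE p0 p1 i ∈ t n
      · obtain ⟨i, hi⟩ := hpre
        have hne : (t n).Nonempty := ⟨_, hi⟩
        by_cases hDtop : EMetric.diam (t n) = ⊤
        · refine ⟨i, 0, fun jj _ => by simp [cylSet], ?_⟩
          rw [iSup_pos hne, hDtop, ENNReal.top_rpow_of_pos hs, ENNReal.top_mul
            (by simp [ENNReal.inv_ne_zero, hCgtop] : Cg⁻¹ ≠ 0)]
          exact le_top
        · by_cases hD0 : EMetric.diam (t n) = 0
          · obtain ⟨M, hM⟩ := hdeep i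
            refine ⟨i, M, ?_, le_trans hM le_add_self⟩
            intro jj hjj
            have hjji : piE p0 p1 jj = piE p0 p1 i := by
              have h1 := EMetric.edist_le_diam_of_mem hjj hi
              rw [show Metric.ediam (t n) = 0 from hD0] at h1
              simpa using h1
            have : jj = i := piE_injective hp0 hp1 hgap hjji
            rw [this]
            exact fun k _ => rfl
          · set d : ℝ := (EMetric.diam (t n)).toReal with hddef
            have hdpos : 0 < d := ENNReal.toReal_pos hD0 hDtop
            have hdiam : ∀ x ∈ t n, ∀ y ∈ t n, |x - y| ≤ d := by
              intro x hx y hy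
              have h1 := EMetric.edist_le_diam_of_mem hx hy
              have h2 := ENNReal.toReal_mono hDtop h1
              rwa [← dist_edist, Real.dist_eq] at h2
            obtain ⟨M, hMcov, hMmass⟩ :=
              preimage_subset_cyl hp0 hp1 hgap (t n) d hdpos hdiam i hi
            refine ⟨i, M, hMcov, ?_⟩
            have hmass2 : rhoP (p0 ^ s) (p1 ^ s) i M ≤ (d / g) ^ s := by
              rw [rhoP_rpow hp0 hp1]
              exact Real.rpow_le_rpow (rhoP_pos hp0 hp1 i M).le hMmass hs.le
            have heqr : ENNReal.ofReal ((d/g)^s)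
                = (⨆ _ : (t n).Nonempty, EMetric.diam (t n) ^ s) * Cg⁻¹ := by
              rw [iSup_pos hne, Real.div_rpow hdpos.le hg.le,
                ENNReal.ofReal_div_of_pos (Real.rpow_pos_of_pos hg s), div_eq_mul_inv,
                ← hCgdef, ← ENNReal.ofReal_rpow_of_pos hdpos, ENNReal.ofReal_toReal hDtop]
            calc ENNReal.ofReal (rhoP (p0 ^ s) (p1 ^ s) i M)
                ≤ ENNReal.ofReal ((d/g)^s) := ENNReal.ofReal_le_ofReal hmass2
              _ = _ := heqr
              _ ≤ _ := le_self_add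
      · push_neg at hpre
        obtain ⟨M, hM⟩ := hdeep (fun _ => false)
        exact ⟨fun _ => false, M, fun jj hjj => absurd hjj (hpre jj), le_trans hM le_add_self⟩
    choose jf mf hcov2 hmass using hchoice
    have h1 : (1:ℝ≥0∞) ≤ ∑' n, ENNReal.ofReal (rhoP (p0 ^ s) (p1 ^ s) (jf n) (mf n)) := by
      refine cover_mass hr0 hr1 hrsum jf mf ?_
      intro i
      obtain ⟨n, hn⟩ := Set.mem_iUnion.1 (hcovt (Set.mem_range_self i))
      exact ⟨n, hcov2 n i hn⟩
    have hgeo : ∑' n : ℕ, ((2⁻¹:ℝ≥0∞) ^ (n+2)) = 2⁻¹ := by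
      have hrw : ∀ n : ℕ, ((2⁻¹:ℝ≥0∞) ^ (n+2)) = (2⁻¹)^2 * (2⁻¹)^n := fun n => by
        rw [pow_add, mul_comm]
      rw [tsum_congr hrw, ENNReal.tsum_mul_left, ENNReal.tsum_geometric,
        ENNReal.one_sub_inv_two]
      rw [pow_two, mul_assoc, ENNReal.mul_inv_cancel (by norm_num) (by norm_num), mul_one]
    have h2 : ∑' n, ENNReal.ofReal (rhoP (p0 ^ s) (p1 ^ s) (jf n) (mf n)) ≤
        (∑' n, ⨆ _ : (t n).Nonempty, EMetric.diam (t n) ^ s) * Cg⁻¹ + 2⁻¹ := by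
      calc ∑' n, ENNReal.ofReal (rhoP (p0 ^ s) (p1 ^ s) (jf n) (mf n))
          ≤ ∑' n, ((⨆ _ : (t n).Nonempty, EMetric.diam (t n) ^ s) * Cg⁻¹
              + (2⁻¹ : ℝ≥0∞) ^ (n+2)) := ENNReal.tsum_le_tsum hmass
        _ = (∑' n, (⨆ _ : (t n).Nonempty, EMetric.diam (t n) ^ s) * Cg⁻¹)
              + ∑' n : ℕ, ((2⁻¹:ℝ≥0∞) ^ (n+2)) := ENNReal.tsum_add
        _ = (∑' n, ⨆ _ : (t n).Nonempty, EMetric.diam (t n) ^ s) * Cg⁻¹ + 2⁻¹ := by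
            rw [ENNReal.tsum_mul_right, hgeo]
    have h3 : (1:ℝ≥0∞) ≤
        (∑' n, ⨆ _ : (t n).Nonempty, EMetric.diam (t n) ^ s) * Cg⁻¹ + 2⁻¹ :=
      le_trans h1 h2
    have h4 : (2⁻¹:ℝ≥0∞) ≤ (∑' n, ⨆ _ : (t n).Nonempty, EMetric.diam (t n) ^ s) * Cg⁻¹ := by
      have h5 : (2⁻¹:ℝ≥0∞) + 2⁻¹ ≤
          (∑' n, ⨆ _ : (t n).Nonempty, EMetric.diam (t n) ^ s) * Cg⁻¹ + 2⁻¹ := by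
        rw [ENNReal.inv_two_add_inv_two]
        exact h3
      exact (WithTop.add_le_add_iff_right (by norm_num : (2⁻¹:ℝ≥0∞) ≠ ⊤)).1 h5
    calc Cg * 2⁻¹ = 2⁻¹ * Cg := mul_comm _ _
      _ ≤ ((∑' n, ⨆ _ : (t n).Nonempty, EMetric.diam (t n) ^ s) * Cg⁻¹) * Cg :=
          mul_le_mul_left h4 Cg
      _ = ∑' n, ⨆ _ : (t n).Nonempty, EMetric.diam (t n) ^ s := by
          rw [mul_assoc, ENNReal.inv_mul_cancel hCg0 hCgtop, mul_one]
  rw [Measure.hausdorffMeasure_apply]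
  refine le_iSup₂_of_le 1 one_pos ?_
  refine le_iInf fun t => le_iInf fun hcov => le_iInf fun _ => key t hcov

lemma dimH_range_piE (hp0 : 1 < p0) (hp1 : 1 < p1) (hgap : (p1-1)⁻¹/p0 < 1/p1) {s : ℝ}
    (hs : 0 < s) (heq : p0 ^ (-s) + p1 ^ (-s) = 1) :
    dimH (Set.range (piE p0 p1)) = ENNReal.ofReal s := by
  have hsnn : ((s.toNNReal : ℝ≥0) : ℝ) = s := Real.coe_toNNReal s hs.le
  have hofReal : ((s.toNNReal : ℝ≥0) : ℝ≥0∞) = ENNReal.ofReal s := rfl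
  apply le_antisymm
  · refine le_trans (dimH_le_of_hausdorffMeasure_ne_top (d := s.toNNReal) ?_) hofReal.le
    rw [hsnn]
    exact (lt_of_le_of_lt (upper_bound hp0 hp1 hs heq) ENNReal.ofReal_lt_top).ne
  · refine hofReal ▸ le_dimH_of_hausdorffMeasure_ne_zero (d := s.toNNReal) ?_
    rw [hsnn]
    refine ne_of_gt (lt_of_lt_of_le ?_ (lower_bound hp0 hp1 hgap hs heq))
    refine ENNReal.mul_pos ?_ (by norm_num)
    exact ne_of_gt (ENNReal.ofReal_pos.2 (Real.rpow_pos_of_pos (by linarith) s))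

lemma univoque_eq_range (hp0 : 1 < p0) (hp1 : 1 < p1) (hgap : (p1-1)⁻¹/p0 < 1/p1) :
    univoque p0 p1 = Set.range (piE p0 p1) := by
  ext x
  constructor
  · rintro ⟨i, hi, -⟩
    exact ⟨i, hi⟩
  · rintro ⟨i, rfl⟩
    exact ⟨i, rfl, fun j hj => piE_injective hp0 hp1 hgap hj⟩

end KL

/-- Theorem 1(iv): if `q₀ > 1` and `q₁ > q₀/(q₀−1)`, then there is a unique `s > 0` with
`q₀^{−s} + q₁^{−s} = 1`; this `s` satisfies `0 < s < 1` and `dim_H 𝒰_{q₀,q₁} = s`. -/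
theorem stmt6 (q0 q1 : ℝ) (hq0 : 1 < q0) (hq1 : q0 / (q0 - 1) < q1) :
    (∃! s : ℝ, 0 < s ∧ q0 ^ (-s) + q1 ^ (-s) = 1) ∧
    ∀ s : ℝ, 0 < s → q0 ^ (-s) + q1 ^ (-s) = 1 →
      s < 1 ∧ dimH (univoque q0 q1) = ENNReal.ofReal s := by
  have hd0 : (0:ℝ) < q0 - 1 := by linarith
  have h11 : (1:ℝ) < q0 / (q0 - 1) := (one_lt_div hd0).2 (by linarith)
  have hq1' : 1 < q1 := lt_trans h11 hq1
  have hq1pos : (0:ℝ) < q1 := by linarith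
  have hq0pos : (0:ℝ) < q0 := by linarith
  have hkey : q0 + q1 < q0 * q1 := by
    have := (div_lt_iff₀ hd0).1 hq1
    nlinarith
  have hgap : (q1-1)⁻¹/q0 < 1/q1 := by
    rw [div_lt_div_iff₀ hq0pos hq1pos, one_mul, mul_comm, ← div_eq_mul_inv,
      div_lt_iff₀ (by linarith : (0:ℝ) < q1 - 1)]
    nlinarith
  set f : ℝ → ℝ := fun s => q0 ^ (-s) + q1 ^ (-s) with hfdef
  have hanti : StrictAnti f := by
    intro a b hab
    exact add_lt_add ((Real.rpow_lt_rpow_left_iff hq0).2 (by linarith))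
      ((Real.rpow_lt_rpow_left_iff hq1').2 (by linarith))
  have hcont : Continuous f := by
    have : f = fun s => Real.exp (Real.log q0 * (-s)) + Real.exp (Real.log q1 * (-s)) := by
      funext s
      rw [hfdef]
      simp only
      rw [Real.rpow_def_of_pos hq0pos, Real.rpow_def_of_pos hq1pos]
    rw [this]
    fun_prop
  have hf0 : f 0 = 2 := by simp [hfdef]; norm_num
  have hf1 : f 1 < 1 := by
    have : f 1 = q0⁻¹ + q1⁻¹ := by
      simp [hfdef, Real.rpow_neg_one]
    rw [this, inv_eq_one_div, inv_eq_one_div,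
      div_add_div _ _ (ne_of_gt hq0pos) (ne_of_gt hq1pos), div_lt_one (by positivity)]
    linarith
  have hIVT := intermediate_value_Icc' (zero_le_one) hcont.continuousOn
  have h1mem : (1:ℝ) ∈ Set.Icc (f 1) (f 0) := ⟨hf1.le, by rw [hf0]; norm_num⟩
  obtain ⟨s₀, hs₀mem, hfs₀⟩ := hIVT h1mem
  have hs₀pos : 0 < s₀ := by
    rcases lt_or_eq_of_le hs₀mem.1 with h | h
    · exact h
    · exfalso
      rw [← h] at hfs₀
      rw [hf0] at hfs₀
      norm_num at hfs₀
  have hslt1 : ∀ s : ℝ, 0 < s → q0 ^ (-s) + q1 ^ (-s) = 1 → s < 1 := by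
    intro s hs hseq
    by_contra hge
    push_neg at hge
    have : f s ≤ f 1 := hanti.antitone hge
    rw [show f s = 1 from hseq] at this
    linarith
  refine ⟨⟨s₀, ⟨hs₀pos, hfs₀⟩, ?_⟩, ?_⟩
  · rintro y ⟨hy, hyeq⟩
    exact hanti.injective (hyeq.trans hfs₀.symm)
  · intro s hs hseq
    refine ⟨hslt1 s hs hseq, ?_⟩
    rw [KL.univoque_eq_range hq0 hq1' hgap]
    exact KL.dimH_range_piE hq0 hq1' hgap hs hseq
end

section
/- Let a ∈ {0,1}^ℕ start with digit 0, let b ∈ {0,1}^ℕ start with digit 1, and let q₀,q₁ > 1. If max π_{q₀,q₁}([0]_{a,b}) < min π_{q₀,q₁}([1]_{a,b}), then dim_H π_{q₀,q₁}(Ω_{a,b}) = s, where s is the unique s ≥ 0 satisfying lim_{n→∞} (1/n) log Σ_{i₁⋯iₙ ∈ L_{a,b,n}} (q_{i₁}⋯q_{iₙ})^{−s} = 0. In particular, if h(Ω_{a,b}) = 0 then dim_H π_{q₀,q₁}(Ω_{a,b}) = 0. -/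
open Filter Topology

/-- The cylinder `[d]_{a,b} = Ω_{a,b} ∩ d{0,1}^ℕ` of a single digit `d`. -/
def cyl (a b : ℕ → Bool) (d : Bool) : Set (ℕ → Bool) := {i | i ∈ Omega a b ∧ i 0 = d}

/-!
The partition sums `S_n(s) = ∑_{w ∈ L_n} (q_{w₁} ⋯ q_{wₙ})^{-s}` are submultiplicative, so
the pressure `P(s) = lim (log S_n(s)) / n` exists. It is continuous and strictly decreasing
with `P(0) = h(Ω) ≥ 0`, hence has a unique zero `s₀`.

The points of `Ω` beginning with a word `w` are mapped into a set of diameter `≲ 1 / q_w`, so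
for `d > s₀` the covers by level-`n` cylinders have total `d`-weight `≲ S_n(d) → 0`, and
`μH[d] = 0`.

Conversely, the separation hypothesis is a gap `δ > 0` between `π[0]` and `π[1]`; by
self-similarity, two points of `Ω` that first differ right after a word `w` are mapped at
distance `≥ δ / q_w`. Hence every set of a cover of `π(Ω)` may be replaced by a cylinder of
comparable weight, and by compactness finitely many cylinders suffice. Since `P(s₀) = 0`, all
`S_N(s₀) ≥ 1`; a finite cylinder cover of `Ω` of total `s₀`-weight `ε < 1` would, by
splitting every word after its covering word, force `S_N(s₀) ≲ ε^{N/ℓ}`. So every cover has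
weight `≥ δ^{s₀}`, and `μH[s₀] > 0`.
-/

open MeasureTheory
open scoped ENNReal NNReal

variable {a b : ℕ → Bool} {q0 q1 : ℝ}

section Symbolic

lemma shiftTail_shiftTail (i : ℕ → Bool) (m n : ℕ) :
    shiftTail (shiftTail i m) n = shiftTail i (m + n) := by
  funext k; simp [shiftTail, Nat.add_assoc]

lemma shiftTail_mem_Omega {i : ℕ → Bool} (h : i ∈ Omega a b) (n : ℕ) :
    shiftTail i n ∈ Omega a b := by
  intro m hm
  rw [shiftTail_shiftTail] at hm
  exact h (n + m) hm

lemma const_false_mem_Omega : (fun _ => false) ∈ Omega a b := by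
  rintro n ⟨⟨k, -, hk⟩, -⟩
  exact absurd hk (by simp [shiftTail])

def prefixWord (i : ℕ → Bool) (n : ℕ) : Fin n → Bool := fun k => i k

lemma mem_Lwords_iff {n : ℕ} {w : Fin n → Bool} :
    w ∈ Lwords a b n ↔ ∃ i ∈ Omega a b, prefixWord i n = w := by
  simp only [Lwords, Set.Finite.mem_toFinset, Set.mem_ofPred_eq, funext_iff, prefixWord]

lemma prefixWord_mem_Lwords {i : ℕ → Bool} (h : i ∈ Omega a b) (n : ℕ) :
    prefixWord i n ∈ Lwords a b n :=
  mem_Lwords_iff.2 ⟨i, h, rfl⟩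

lemma Lwords_nonempty (a b : ℕ → Bool) (n : ℕ) : (Lwords a b n).Nonempty :=
  ⟨_, prefixWord_mem_Lwords const_false_mem_Omega n⟩

lemma prefixWord_eq_of_le {i j : ℕ → Bool} {m n : ℕ} (hmn : m ≤ n)
    (h : prefixWord i n = prefixWord j n) : prefixWord i m = prefixWord j m :=
  funext fun k => congrFun h ⟨k, k.2.trans_le hmn⟩

lemma prefixWord_eq_of_shiftTail {i j : ℕ → Bool} {k N : ℕ} (hk : k ≤ N)
    (hpre : prefixWord i k = prefixWord j k)
    (hsuf : prefixWord (shiftTail i k) (N - k) = prefixWord (shiftTail j k) (N - k)) :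
    prefixWord i N = prefixWord j N := by
  funext ⟨m, hm⟩
  rcases lt_or_ge m k with hmk | hkm
  · exact congrFun hpre ⟨m, hmk⟩
  · have := congrFun hsuf ⟨m - k, by omega⟩
    simpa [prefixWord, shiftTail, Nat.add_sub_cancel' hkm] using this

lemma isOpen_setOf_lexLt : IsOpen {p : (ℕ → Bool) × (ℕ → Bool) | lexLt p.1 p.2} := by
  have hcoord : ∀ m (r : Bool → Bool → Prop),
      IsOpen {p : (ℕ → Bool) × (ℕ → Bool) | r (p.1 m) (p.2 m)} := fun m r =>
    (show Continuous fun p : (ℕ → Bool) × (ℕ → Bool) => (p.1 m, p.2 m) by fun_prop)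
      |>.isOpen_preimage {x | r x.1 x.2} (isOpen_discrete _)
  simp only [lexLt, Set.ofPred_exists, Set.ofPred_and]
  refine isOpen_iUnion fun n => IsOpen.inter ?_ (hcoord n (· < ·))
  simpa [Set.ofPred_forall] using
    isOpen_biInter_finset (s := Finset.range n) fun m _ => hcoord m (· = ·)

lemma isClosed_Omega (a b : ℕ → Bool) : IsClosed (Omega a b) := by
  have hlex (f g : (ℕ → Bool) → (ℕ → Bool)) (hf : Continuous f) (hg : Continuous g) :
      IsOpen {i | lexLt (f i) (g i)} :=
    isOpen_setOf_lexLt.preimage (hf.prodMk hg)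
  have hshift (n : ℕ) : Continuous fun i : ℕ → Bool => shiftTail i n :=
    continuous_pi fun k => continuous_apply (n + k)
  simp only [Omega, Set.ofPred_forall]
  exact isClosed_iInter fun n =>
    ((hlex _ _ continuous_const (hshift n)).inter
      (hlex _ _ (hshift n) continuous_const)).isClosed_compl

lemma isCompact_Omega (a b : ℕ → Bool) : IsCompact (Omega a b) :=
  (isClosed_Omega a b).isCompact

lemma isOpen_setOf_prefixWord_eq (n : ℕ) (w : Fin n → Bool) :
    IsOpen {i : ℕ → Bool | prefixWord i n = w} := by
  simp only [funext_iff, Set.ofPred_forall, prefixWord]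
  exact isOpen_iInter_of_finite fun k =>
    (continuous_apply (A := fun _ : ℕ => Bool) k).isOpen_preimage {w k} (isOpen_discrete _)

lemma subsingleton_or_exists_split (A : Set (ℕ → Bool)) :
    A.Subsingleton ∨ ∃ k, (∀ i ∈ A, ∀ j ∈ A, prefixWord i k = prefixWord j k) ∧
      ∃ i ∈ A, ∃ j ∈ A, i k = true ∧ j k = false := by
  classical
  by_cases hsplit : ∃ m, ∃ i ∈ A, ∃ j ∈ A, i m ≠ j m
  · right
    refine ⟨Nat.find hsplit, fun i hi j hj => funext fun m => ?_, ?_⟩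
    · by_contra hne
      exact Nat.find_min hsplit m.2 ⟨i, hi, j, hj, hne⟩
    · obtain ⟨i, hi, j, hj, hne⟩ := Nat.find_spec hsplit
      cases hik : i (Nat.find hsplit)
      · exact ⟨j, hj, i, hi, by simpa [hik] using hne.symm, hik⟩
      · exact ⟨i, hi, j, hj, hik, by simpa [hik] using hne.symm⟩
  · left
    intro i hi j hj
    funext m
    by_contra hne
    exact hsplit ⟨m, i, hi, j, hj, hne⟩

end Symbolic

section Weights

lemma min_le_qb (d : Bool) : min q0 q1 ≤ qb q0 q1 d := by cases d <;> simp [qb]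

lemma qb_le_max (d : Bool) : qb q0 q1 d ≤ max q0 q1 := by cases d <;> simp [qb]

noncomputable def wordWeight (q0 q1 : ℝ) {n : ℕ} (w : Fin n → Bool) : ℝ :=
  ∏ j, qb q0 q1 (w j)

lemma wordWeight_prefixWord (i : ℕ → Bool) (n : ℕ) :
    wordWeight q0 q1 (prefixWord i n) = ∏ j ∈ Finset.range n, qb q0 q1 (i j) :=
  Fin.prod_univ_eq_prod_range (fun j => qb q0 q1 (i j)) n

lemma wordWeight_prefixWord_add (i : ℕ → Bool) (m n : ℕ) :
    wordWeight q0 q1 (prefixWord i (m + n)) =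
      wordWeight q0 q1 (prefixWord i m) * wordWeight q0 q1 (prefixWord (shiftTail i m) n) := by
  simp only [wordWeight_prefixWord, Finset.prod_range_add, shiftTail]

variable (hq0 : 1 < q0) (hq1 : 1 < q1)
include hq0 hq1

lemma qb_pos (d : Bool) : 0 < qb q0 q1 d :=
  zero_lt_one.trans ((lt_min hq0 hq1).trans_le (min_le_qb d))

lemma wordWeight_pos {n : ℕ} (w : Fin n → Bool) : 0 < wordWeight q0 q1 w :=
  Finset.prod_pos fun j _ => qb_pos hq0 hq1 (w j)

lemma min_pow_le_wordWeight {n : ℕ} (w : Fin n → Bool) : min q0 q1 ^ n ≤ wordWeight q0 q1 w :=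
  calc min q0 q1 ^ n = ∏ _j : Fin n, min q0 q1 := by simp
    _ ≤ wordWeight q0 q1 w :=
      Finset.prod_le_prod (fun _ _ => (zero_lt_one.trans (lt_min hq0 hq1)).le)
        fun j _ => min_le_qb (w j)

lemma wordWeight_le_max_pow {n : ℕ} (w : Fin n → Bool) : wordWeight q0 q1 w ≤ max q0 q1 ^ n :=
  calc wordWeight q0 q1 w ≤ ∏ _j : Fin n, max q0 q1 :=
        Finset.prod_le_prod (fun j _ => (qb_pos hq0 hq1 (w j)).le) fun j _ => qb_le_max (w j)
    _ = max q0 q1 ^ n := by simp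

end Weights

lemma hasSum_inv_pow_succ {r : ℝ} (hr : 1 < r) :
    HasSum (fun k : ℕ => r⁻¹ ^ (k + 1)) (r - 1)⁻¹ := by
  have hr0 : 0 < r := zero_lt_one.trans hr
  have h := HasSum.mul_left r⁻¹ <|
    hasSum_geometric_of_lt_one (inv_nonneg.2 hr0.le) (inv_lt_one_of_one_lt₀ hr)
  rw [show r⁻¹ * (1 - r⁻¹)⁻¹ = (r - 1)⁻¹ by field_simp] at h
  simpa only [pow_succ'] using h

section Projection

noncomputable def piTerm (q0 q1 : ℝ) (i : ℕ → Bool) (k : ℕ) : ℝ :=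
  (if i k then (1 : ℝ) else 0) / wordWeight q0 q1 (prefixWord i (k + 1))

lemma piE_eq_tsum (i : ℕ → Bool) : piE q0 q1 i = ∑' k, piTerm q0 q1 i k := by
  simp only [piE, piTerm, wordWeight_prefixWord]

lemma piTerm_congr {i j : ℕ → Bool} {n k : ℕ} (hk : k < n)
    (h : prefixWord i n = prefixWord j n) : piTerm q0 q1 i k = piTerm q0 q1 j k := by
  rw [piTerm, piTerm, prefixWord_eq_of_le hk h, show i k = j k from congrFun h ⟨k, hk⟩]

lemma piTerm_add (i : ℕ → Bool) (n k : ℕ) :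
    piTerm q0 q1 i (k + n) =
      (wordWeight q0 q1 (prefixWord i n))⁻¹ * piTerm q0 q1 (shiftTail i n) k := by
  rw [piTerm, piTerm, show k + n + 1 = n + (k + 1) by omega, wordWeight_prefixWord_add,
    show i (k + n) = shiftTail i n k by simp [shiftTail, Nat.add_comm], mul_comm,
    ← div_div, div_eq_inv_mul]

variable (hq0 : 1 < q0) (hq1 : 1 < q1)
include hq0 hq1

lemma piTerm_nonneg (i : ℕ → Bool) (k : ℕ) : 0 ≤ piTerm q0 q1 i k :=
  div_nonneg (by split <;> norm_num) (wordWeight_pos hq0 hq1 _).le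

lemma piTerm_le (i : ℕ → Bool) (k : ℕ) : piTerm q0 q1 i k ≤ (min q0 q1)⁻¹ ^ (k + 1) := by
  have hW := wordWeight_pos hq0 hq1 (prefixWord i (k + 1))
  calc piTerm q0 q1 i k ≤ 1 / wordWeight q0 q1 (prefixWord i (k + 1)) :=
        div_le_div_of_nonneg_right (by split <;> norm_num) hW.le
    _ ≤ 1 / min q0 q1 ^ (k + 1) :=
        one_div_le_one_div_of_le (pow_pos (zero_lt_one.trans (lt_min hq0 hq1)) _)
          (min_pow_le_wordWeight hq0 hq1 _)
    _ = (min q0 q1)⁻¹ ^ (k + 1) := by rw [one_div, inv_pow]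

lemma summable_piTerm (i : ℕ → Bool) : Summable (piTerm q0 q1 i) :=
  (hasSum_inv_pow_succ (lt_min hq0 hq1)).summable.of_nonneg_of_le (piTerm_nonneg hq0 hq1 i)
    (piTerm_le hq0 hq1 i)

lemma piE_nonneg (i : ℕ → Bool) : 0 ≤ piE q0 q1 i := by
  rw [piE_eq_tsum]; exact tsum_nonneg (piTerm_nonneg hq0 hq1 i)

lemma piE_le (i : ℕ → Bool) : piE q0 q1 i ≤ (min q0 q1 - 1)⁻¹ := by
  rw [piE_eq_tsum]
  exact hasSum_le (piTerm_le hq0 hq1 i) (summable_piTerm hq0 hq1 i).hasSum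
    (hasSum_inv_pow_succ (lt_min hq0 hq1))

lemma piE_eq_sum_add_shiftTail (i : ℕ → Bool) (n : ℕ) :
    piE q0 q1 i = ∑ k ∈ Finset.range n, piTerm q0 q1 i k
      + (wordWeight q0 q1 (prefixWord i n))⁻¹ * piE q0 q1 (shiftTail i n) := by
  rw [piE_eq_tsum, piE_eq_tsum, ← (summable_piTerm hq0 hq1 i).sum_add_tsum_nat_add n,
    ← tsum_mul_left]
  simp only [piTerm_add i n]

lemma piE_sub_piE_of_prefixWord_eq {i j : ℕ → Bool} {n : ℕ}
    (h : prefixWord i n = prefixWord j n) :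
    piE q0 q1 i - piE q0 q1 j = (wordWeight q0 q1 (prefixWord i n))⁻¹ *
      (piE q0 q1 (shiftTail i n) - piE q0 q1 (shiftTail j n)) := by
  rw [piE_eq_sum_add_shiftTail hq0 hq1 i n, piE_eq_sum_add_shiftTail hq0 hq1 j n, h,
    Finset.sum_congr rfl fun k hk => piTerm_congr (Finset.mem_range.1 hk) h]
  ring

lemma abs_piE_sub_le {i j : ℕ → Bool} {n : ℕ} (h : prefixWord i n = prefixWord j n) :
    |piE q0 q1 i - piE q0 q1 j| ≤
      (min q0 q1 - 1)⁻¹ * (wordWeight q0 q1 (prefixWord i n))⁻¹ := by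
  have hW := inv_pos.2 (wordWeight_pos hq0 hq1 (prefixWord i n))
  rw [piE_sub_piE_of_prefixWord_eq hq0 hq1 h, abs_mul, abs_of_pos hW, mul_comm]
  refine mul_le_mul_of_nonneg_right (abs_sub_le_iff.2 ⟨?_, ?_⟩) hW.le
  · linarith [piE_le hq0 hq1 (shiftTail i n), piE_nonneg hq0 hq1 (shiftTail j n)]
  · linarith [piE_le hq0 hq1 (shiftTail j n), piE_nonneg hq0 hq1 (shiftTail i n)]

end Projection

section PartitionSum

noncomputable def partitionSum (a b : ℕ → Bool) (q0 q1 s : ℝ) (n : ℕ) : ℝ :=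
  ∑ w ∈ Lwords a b n, wordWeight q0 q1 w ^ (-s)

lemma partitionSum_zero_eq_card (n : ℕ) :
    partitionSum a b q0 q1 0 n = (Lwords a b n).card := by
  simp [partitionSum]

lemma partitionSum_length_zero (s : ℝ) : partitionSum a b q0 q1 s 0 = 1 := by
  have hL : Lwords a b 0 = Finset.univ :=
    Finset.eq_univ_of_forall fun w =>
      mem_Lwords_iff.2 ⟨_, const_false_mem_Omega, Subsingleton.elim _ _⟩
  simp [partitionSum, wordWeight, hL]

variable (hq0 : 1 < q0) (hq1 : 1 < q1)
include hq0 hq1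

lemma partitionSum_pos (s : ℝ) (n : ℕ) : 0 < partitionSum a b q0 q1 s n :=
  Finset.sum_pos (fun w _ => Real.rpow_pos_of_pos (wordWeight_pos hq0 hq1 w) _)
    (Lwords_nonempty a b n)

/-- Every word of length `N` splits into the covering word it begins with and a word of
length `N - k n`. -/
lemma partitionSum_le_of_cover {ι : Type*} (s : ℝ) (F : Finset ι) (k : ι → ℕ)
    (w : ∀ n, Fin (k n) → Bool)
    (hcov : ∀ i ∈ Omega a b, ∃ n ∈ F, prefixWord i (k n) = w n)
    {N : ℕ} (hN : ∀ n ∈ F, k n ≤ N) :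
    partitionSum a b q0 q1 s N ≤
      ∑ n ∈ F, wordWeight q0 q1 (w n) ^ (-s) * partitionSum a b q0 q1 s (N - k n) := by
  classical
  have : Nonempty ι := let ⟨n, _⟩ := hcov _ const_false_mem_Omega; ⟨n⟩
  have hext : ∀ v ∈ Lwords a b N, ∃ i ∈ Omega a b, prefixWord i N = v :=
    fun v hv => mem_Lwords_iff.1 hv
  choose! I hIΩ hIv using hext
  have hfirst : ∀ v ∈ Lwords a b N, ∃ n ∈ F, prefixWord (I v) (k n) = w n :=
    fun v hv => hcov _ (hIΩ v hv)
  choose! G hGF hGw using hfirst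
  rw [partitionSum, ← Finset.sum_fiberwise_of_maps_to hGF]
  refine Finset.sum_le_sum fun n hn => ?_
  let suffix (v : Fin N → Bool) := prefixWord (shiftTail (I v) (k n)) (N - k n)
  have hweight : ∀ v ∈ {v ∈ Lwords a b N | G v = n},
      wordWeight q0 q1 v ^ (-s) =
        wordWeight q0 q1 (w n) ^ (-s) * wordWeight q0 q1 (suffix v) ^ (-s) := by
    intro v hv
    obtain ⟨hvL, rfl⟩ := Finset.mem_filter.1 hv
    have hadd := wordWeight_prefixWord_add (q0 := q0) (q1 := q1) (I v) (k (G v)) (N - k (G v))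
    rw [Nat.add_sub_cancel' (hN _ hn), hIv v hvL, hGw v hvL] at hadd
    rw [hadd, Real.mul_rpow (wordWeight_pos hq0 hq1 _).le (wordWeight_pos hq0 hq1 _).le]
  have hinj : Set.InjOn suffix ({v ∈ Lwords a b N | G v = n} : Finset _) := by
    intro v hv v' hv' hsuf
    obtain ⟨hvL, rfl⟩ := Finset.mem_filter.1 (Finset.mem_coe.1 hv)
    obtain ⟨hvL', hG⟩ := Finset.mem_filter.1 (Finset.mem_coe.1 hv')
    rw [← hIv v hvL, ← hIv v' hvL']
    exact prefixWord_eq_of_shiftTail (hN _ hn) ((hGw v hvL).trans (hG ▸ hGw v' hvL').symm) hsuf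
  rw [Finset.sum_congr rfl hweight, ← Finset.mul_sum,
    ← Finset.sum_image (f := fun u => wordWeight q0 q1 u ^ (-s)) hinj]
  refine mul_le_mul_of_nonneg_left (Finset.sum_le_sum_of_subset_of_nonneg ?_ fun u _ _ =>
    (Real.rpow_pos_of_pos (wordWeight_pos hq0 hq1 u) _).le)
    (Real.rpow_nonneg (wordWeight_pos hq0 hq1 _).le _)
  intro u hu
  obtain ⟨v, hv, rfl⟩ := Finset.mem_image.1 hu
  exact prefixWord_mem_Lwords (shiftTail_mem_Omega (hIΩ v (Finset.mem_filter.1 hv).1) _) _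

lemma partitionSum_add_le (s : ℝ) (m n : ℕ) :
    partitionSum a b q0 q1 s (m + n) ≤
      partitionSum a b q0 q1 s m * partitionSum a b q0 q1 s n := by
  have h := partitionSum_le_of_cover hq0 hq1 s (Lwords a b m) (fun _ => m) id
    (fun i hi => ⟨_, prefixWord_mem_Lwords hi m, rfl⟩) (N := m + n)
    fun _ _ => Nat.le_add_right m n
  rw [Nat.add_sub_cancel_left, ← Finset.sum_mul] at h
  exact h

lemma exists_partitionSum_le_mul_pow {ι : Type*} {s c : ℝ} {ℓ : ℕ}
    (hc0 : 0 < c) (hc1 : c ≤ 1)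
    (F : Finset ι) (k : ι → ℕ) (w : ∀ n, Fin (k n) → Bool)
    (hcov : ∀ i ∈ Omega a b, ∃ n ∈ F, prefixWord i (k n) = w n)
    (hk : ∀ n ∈ F, 1 ≤ k n ∧ k n ≤ ℓ)
    (hsum : ∑ n ∈ F, wordWeight q0 q1 (w n) ^ (-s) ≤ c ^ ℓ) :
    ∃ B, ∀ N, partitionSum a b q0 q1 s N ≤ B * c ^ N := by
  set B := ∑ M ∈ Finset.range ℓ, partitionSum a b q0 q1 s M / c ^ M
  have hB : 0 ≤ B := Finset.sum_nonneg fun M _ =>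
    (div_pos (partitionSum_pos hq0 hq1 s M) (pow_pos hc0 M)).le
  refine ⟨B, fun N => ?_⟩
  induction N using Nat.strong_induction_on with
  | _ N ih =>
  rcases lt_or_ge N ℓ with hNℓ | hℓN
  · rw [← div_le_iff₀ (pow_pos hc0 N)]
    exact Finset.single_le_sum (f := fun M => partitionSum a b q0 q1 s M / c ^ M)
      (fun M _ => (div_pos (partitionSum_pos hq0 hq1 s M) (pow_pos hc0 M)).le)
      (Finset.mem_range.2 hNℓ)
  calc partitionSum a b q0 q1 s N
      ≤ ∑ n ∈ F, wordWeight q0 q1 (w n) ^ (-s) * partitionSum a b q0 q1 s (N - k n) :=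
        partitionSum_le_of_cover hq0 hq1 s F k w hcov fun n hn => (hk n hn).2.trans hℓN
    _ ≤ ∑ n ∈ F, wordWeight q0 q1 (w n) ^ (-s) * (B * c ^ (N - ℓ)) := by
        refine Finset.sum_le_sum fun n hn => mul_le_mul_of_nonneg_left ?_
          (Real.rpow_nonneg (wordWeight_pos hq0 hq1 _).le _)
        calc partitionSum a b q0 q1 s (N - k n) ≤ B * c ^ (N - k n) :=
              ih _ (by have := (hk n hn).1; have := (hk n hn).2; omega)
          _ ≤ B * c ^ (N - ℓ) :=
              mul_le_mul_of_nonneg_left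
                (pow_le_pow_of_le_one hc0.le hc1 (by have := (hk n hn).2; omega)) hB
    _ ≤ c ^ ℓ * (B * c ^ (N - ℓ)) := by
        rw [← Finset.sum_mul]; exact mul_le_mul_of_nonneg_right hsum (by positivity)
    _ = B * c ^ N := by rw [mul_left_comm, ← pow_add, Nat.add_sub_cancel' hℓN]

/-- A cover of weight `ε < 1` would make the partition sums decay like `ε^{N/ℓ}`, where `ℓ` is
the length of the longest covering word. -/
lemma one_le_sum_of_cover {ι : Type*} {s : ℝ} (hS : ∀ N, 1 ≤ partitionSum a b q0 q1 s N)
    (F : Finset ι) (k : ι → ℕ) (w : ∀ n, Fin (k n) → Bool)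
    (hcov : ∀ i ∈ Omega a b, ∃ n ∈ F, prefixWord i (k n) = w n) :
    1 ≤ ∑ n ∈ F, wordWeight q0 q1 (w n) ^ (-s) := by
  have hterm : ∀ n ∈ F, 0 ≤ wordWeight q0 q1 (w n) ^ (-s) := fun n _ =>
    Real.rpow_nonneg (wordWeight_pos hq0 hq1 _).le _
  by_cases hempty : ∃ n ∈ F, k n = 0
  · obtain ⟨n, hn, hkn⟩ := hempty
    have : IsEmpty (Fin (k n)) := by rw [hkn]; infer_instance
    have hW : wordWeight q0 q1 (w n) = 1 := by simp [wordWeight]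
    simpa [hW] using Finset.single_le_sum hterm hn
  simp only [not_exists, not_and] at hempty
  by_contra! hlt
  obtain ⟨n₀, hn₀, -⟩ := hcov _ const_false_mem_Omega
  set ε := ∑ n ∈ F, wordWeight q0 q1 (w n) ^ (-s)
  have hε : 0 < ε := Finset.sum_pos (fun n _ => Real.rpow_pos_of_pos (wordWeight_pos hq0 hq1 _) _)
    ⟨n₀, hn₀⟩
  set ℓ := F.sup k
  have hℓ : ℓ ≠ 0 :=
    ((Nat.pos_of_ne_zero (hempty n₀ hn₀)).trans_le (Finset.le_sup hn₀)).ne'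
  set c := ε ^ ((ℓ : ℝ)⁻¹)
  have hc0 : 0 < c := Real.rpow_pos_of_pos hε _
  have hc1 : c < 1 := Real.rpow_lt_one hε.le hlt (by positivity)
  obtain ⟨B, hB⟩ := exists_partitionSum_le_mul_pow hq0 hq1 hc0 hc1.le F k w hcov
    (fun n hn => ⟨Nat.one_le_iff_ne_zero.2 (hempty n hn), Finset.le_sup hn⟩)
    (Real.rpow_inv_natCast_pow hε.le hℓ).ge
  have hlim : Tendsto (fun N => B * c ^ N) atTop (𝓝 0) := by
    simpa using (tendsto_pow_atTop_nhds_zero_of_lt_one hc0.le hc1).const_mul B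
  obtain ⟨N, hN⟩ := (hlim.eventually (eventually_lt_nhds one_pos)).exists
  linarith [hS N, hB N]

end PartitionSum

section Pressure

/-- A junk value unless the limit exists, which it does for `0 ≤ s` (`tendsto_pressure`). -/
noncomputable def pressure (a b : ℕ → Bool) (q0 q1 s : ℝ) : ℝ :=
  limUnder atTop fun n : ℕ => Real.log (partitionSum a b q0 q1 s n) / n

variable (hq0 : 1 < q0) (hq1 : 1 < q1)
include hq0 hq1

lemma partitionSum_le_mul {s t : ℝ} (hst : s ≤ t) (n : ℕ) :
    partitionSum a b q0 q1 t n ≤ partitionSum a b q0 q1 s n * (min q0 q1 ^ n) ^ (s - t) := by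
  rw [partitionSum, partitionSum, Finset.sum_mul]
  refine Finset.sum_le_sum fun w _ => ?_
  have hW := wordWeight_pos hq0 hq1 w
  rw [show -t = -s + (s - t) by ring, Real.rpow_add hW]
  exact mul_le_mul_of_nonneg_left (Real.rpow_le_rpow_of_nonpos (by positivity)
    (min_pow_le_wordWeight hq0 hq1 w) (by linarith)) (Real.rpow_nonneg hW.le _)

lemma mul_le_partitionSum {s t : ℝ} (hst : s ≤ t) (n : ℕ) :
    partitionSum a b q0 q1 s n * (max q0 q1 ^ n) ^ (s - t) ≤ partitionSum a b q0 q1 t n := by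
  rw [partitionSum, partitionSum, Finset.sum_mul]
  refine Finset.sum_le_sum fun w _ => ?_
  have hW := wordWeight_pos hq0 hq1 w
  rw [show -t = -s + (s - t) by ring, Real.rpow_add hW]
  exact mul_le_mul_of_nonneg_left (Real.rpow_le_rpow_of_nonpos hW
    (wordWeight_le_max_pow hq0 hq1 w) (by linarith)) (Real.rpow_nonneg hW.le _)

lemma log_partitionSum_le {s t : ℝ} (hst : s ≤ t) (n : ℕ) :
    Real.log (partitionSum a b q0 q1 t n) ≤
      Real.log (partitionSum a b q0 q1 s n) + (s - t) * Real.log (min q0 q1) * n := by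
  have hmin : 0 < min q0 q1 := zero_lt_one.trans (lt_min hq0 hq1)
  have h := Real.log_le_log (partitionSum_pos hq0 hq1 t n)
    (partitionSum_le_mul hq0 hq1 (a := a) (b := b) hst n)
  rw [Real.log_mul (partitionSum_pos hq0 hq1 s n).ne' (by positivity),
    Real.log_rpow (by positivity), Real.log_pow] at h
  linarith

lemma log_partitionSum_ge {s t : ℝ} (hst : s ≤ t) (n : ℕ) :
    Real.log (partitionSum a b q0 q1 s n) + (s - t) * Real.log (max q0 q1) * n ≤
      Real.log (partitionSum a b q0 q1 t n) := by
  have hmax : 0 < max q0 q1 := zero_lt_one.trans (hq0.trans_le (le_max_left _ _))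
  have h := Real.log_le_log (by have := partitionSum_pos hq0 hq1 (a := a) (b := b) s n; positivity)
    (mul_le_partitionSum hq0 hq1 hst n)
  rw [Real.log_mul (partitionSum_pos hq0 hq1 s n).ne' (by positivity),
    Real.log_rpow (by positivity), Real.log_pow] at h
  linarith

lemma log_partitionSum_subadditive (s : ℝ) :
    Subadditive fun n => Real.log (partitionSum a b q0 q1 s n) := fun m n => by
  rw [← Real.log_mul (partitionSum_pos hq0 hq1 s m).ne' (partitionSum_pos hq0 hq1 s n).ne']
  exact Real.log_le_log (partitionSum_pos hq0 hq1 s _) (partitionSum_add_le hq0 hq1 s m n)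

lemma bddBelow_log_partitionSum_div {s : ℝ} (hs : 0 ≤ s) :
    BddBelow (Set.range fun n : ℕ => Real.log (partitionSum a b q0 q1 s n) / n) := by
  refine ⟨-(s * Real.log (max q0 q1)), ?_⟩
  rintro _ ⟨n, rfl⟩
  rcases Nat.eq_zero_or_pos n with rfl | hn
  · simpa using mul_nonneg hs (Real.log_nonneg (hq0.le.trans (le_max_left _ _)))
  have hcard : 0 ≤ Real.log (partitionSum a b q0 q1 0 n) := by
    rw [partitionSum_zero_eq_card]
    exact Real.log_nonneg (by exact_mod_cast (Lwords_nonempty a b n).card_pos)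
  rw [le_div_iff₀ (by exact_mod_cast hn)]
  nlinarith [log_partitionSum_ge hq0 hq1 (a := a) (b := b) hs n]

lemma tendsto_pressure {s : ℝ} (hs : 0 ≤ s) :
    Tendsto (fun n : ℕ => Real.log (partitionSum a b q0 q1 s n) / n) atTop
      (𝓝 (pressure a b q0 q1 s)) := by
  have h := (log_partitionSum_subadditive hq0 hq1 (a := a) (b := b) s).tendsto_lim
    (bddBelow_log_partitionSum_div hq0 hq1 hs)
  rwa [pressure, h.limUnder_eq]

lemma pressure_le_log_partitionSum_div {s : ℝ} (hs : 0 ≤ s) {n : ℕ} (hn : n ≠ 0) :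
    pressure a b q0 q1 s ≤ Real.log (partitionSum a b q0 q1 s n) / n := by
  have h := log_partitionSum_subadditive hq0 hq1 (a := a) (b := b) s
  rw [pressure, (h.tendsto_lim (bddBelow_log_partitionSum_div hq0 hq1 hs)).limUnder_eq]
  exact h.lim_le_div (bddBelow_log_partitionSum_div hq0 hq1 hs) hn

lemma pressure_le_sub {s t : ℝ} (hs : 0 ≤ s) (hst : s ≤ t) :
    pressure a b q0 q1 t ≤ pressure a b q0 q1 s - (t - s) * Real.log (min q0 q1) := by
  refine le_of_tendsto_of_tendsto (tendsto_pressure hq0 hq1 (hs.trans hst))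
    ((tendsto_pressure hq0 hq1 hs).sub_const _) ?_
  filter_upwards [eventually_gt_atTop 0] with n hn
  have hn' : (0 : ℝ) < n := by exact_mod_cast hn
  rw [div_le_iff₀ hn', sub_mul, div_mul_cancel₀ _ hn'.ne']
  linarith [log_partitionSum_le hq0 hq1 (a := a) (b := b) hst n]

lemma sub_le_pressure {s t : ℝ} (hs : 0 ≤ s) (hst : s ≤ t) :
    pressure a b q0 q1 s - (t - s) * Real.log (max q0 q1) ≤ pressure a b q0 q1 t := by
  refine le_of_tendsto_of_tendsto ((tendsto_pressure hq0 hq1 hs).sub_const _)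
    (tendsto_pressure hq0 hq1 (hs.trans hst)) ?_
  filter_upwards [eventually_gt_atTop 0] with n hn
  have hn' : (0 : ℝ) < n := by exact_mod_cast hn
  rw [le_div_iff₀ hn', sub_mul, div_mul_cancel₀ _ hn'.ne']
  linarith [log_partitionSum_ge hq0 hq1 (a := a) (b := b) hst n]

lemma pressure_strictAntiOn : StrictAntiOn (pressure a b q0 q1) (Set.Ici 0) := by
  intro s hs t _ hst
  have hlog : 0 < Real.log (min q0 q1) := Real.log_pos (lt_min hq0 hq1)
  nlinarith [pressure_le_sub hq0 hq1 (a := a) (b := b) hs hst.le]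

lemma continuousOn_pressure : ContinuousOn (pressure a b q0 q1) (Set.Ici 0) := by
  refine (LipschitzOnWith.of_dist_le' (K := Real.log (max q0 q1)) ?_).continuousOn
  have hlog : Real.log (min q0 q1) ≤ Real.log (max q0 q1) :=
    Real.log_le_log (zero_lt_one.trans (lt_min hq0 hq1)) min_le_max
  have hmin : 0 < Real.log (min q0 q1) := Real.log_pos (lt_min hq0 hq1)
  have key : ∀ s t : ℝ, 0 ≤ s → s ≤ t →
      dist (pressure a b q0 q1 s) (pressure a b q0 q1 t) ≤ Real.log (max q0 q1) * dist s t := by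
    intro s t hs hst
    have h1 := pressure_le_sub hq0 hq1 (a := a) (b := b) hs hst
    have h2 := sub_le_pressure hq0 hq1 (a := a) (b := b) hs hst
    rw [Real.dist_eq, Real.dist_eq, abs_sub_comm s t, abs_of_nonneg (sub_nonneg.2 hst), abs_le]
    constructor <;> nlinarith
  intro s hs t ht
  rcases le_total s t with hst | hts
  · exact key s t hs hst
  · rw [dist_comm, dist_comm s]; exact key t s ht hts

lemma pressure_zero_nonneg : 0 ≤ pressure a b q0 q1 0 := by
  refine ge_of_tendsto (tendsto_pressure hq0 hq1 le_rfl) (Eventually.of_forall fun n => ?_)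
  rw [partitionSum_zero_eq_card]
  exact div_nonneg (Real.log_nonneg (by exact_mod_cast (Lwords_nonempty a b n).card_pos))
    n.cast_nonneg

lemma exists_pressure_eq_zero : ∃ s, 0 ≤ s ∧ pressure a b q0 q1 s = 0 := by
  have hlog : 0 < Real.log (min q0 q1) := Real.log_pos (lt_min hq0 hq1)
  set T := pressure a b q0 q1 0 / Real.log (min q0 q1)
  have hT : 0 ≤ T := div_nonneg (pressure_zero_nonneg hq0 hq1) hlog.le
  have hPT : pressure a b q0 q1 T ≤ 0 := by
    have := pressure_le_sub hq0 hq1 (a := a) (b := b) le_rfl hT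
    rwa [sub_zero, div_mul_cancel₀ _ hlog.ne', sub_self] at this
  obtain ⟨s, hs, hPs⟩ := intermediate_value_Icc' hT
    ((continuousOn_pressure hq0 hq1).mono Set.Icc_subset_Ici_self)
    ⟨hPT, pressure_zero_nonneg hq0 hq1⟩
  exact ⟨s, hs.1, hPs⟩

lemma entropy_eq_pressure_zero : entropy a b = pressure a b q0 q1 0 := by
  have h := tendsto_pressure hq0 hq1 (a := a) (b := b) le_rfl
  simp only [partitionSum_zero_eq_card] at h
  exact h.limsup_eq

lemma one_le_partitionSum {s : ℝ} (hs : 0 ≤ s) (hP : 0 ≤ pressure a b q0 q1 s) (N : ℕ) :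
    1 ≤ partitionSum a b q0 q1 s N := by
  rcases Nat.eq_zero_or_pos N with rfl | hN
  · rw [partitionSum_length_zero]
  have h := hP.trans (pressure_le_log_partitionSum_div hq0 hq1 hs hN.ne')
  rwa [le_div_iff₀ (by exact_mod_cast hN), zero_mul,
    Real.log_nonneg_iff (partitionSum_pos hq0 hq1 s N)] at h

lemma tendsto_partitionSum_of_pressure_neg {s : ℝ} (hs : 0 ≤ s)
    (hP : pressure a b q0 q1 s < 0) :
    Tendsto (partitionSum a b q0 q1 s) atTop (𝓝 0) := by
  have hexp : Tendsto (fun n : ℕ => Real.exp (n * (Real.log (partitionSum a b q0 q1 s n) / n)))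
      atTop (𝓝 0) :=
    Real.tendsto_exp_atBot.comp
      (tendsto_natCast_atTop_atTop.atTop_mul_neg hP (tendsto_pressure hq0 hq1 hs))
  refine hexp.congr' ?_
  filter_upwards [eventually_gt_atTop 0] with n hn
  rw [mul_div_cancel₀ _ (by exact_mod_cast hn.ne'), Real.exp_log (partitionSum_pos hq0 hq1 s n)]

end Pressure


section UpperBound

variable (hq0 : 1 < q0) (hq1 : 1 < q1)
include hq0 hq1

lemma ediam_image_setOf_prefixWord_eq_le (N : ℕ) (w : Fin N → Bool) :
    Metric.ediam (piE q0 q1 '' {i | prefixWord i N = w}) ≤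
      ENNReal.ofReal ((min q0 q1 - 1)⁻¹ * (wordWeight q0 q1 w)⁻¹) := by
  refine Metric.ediam_le ?_
  rintro _ ⟨i, rfl, rfl⟩ _ ⟨j, hj, rfl⟩
  rw [edist_dist, Real.dist_eq]
  exact ENNReal.ofReal_le_ofReal (abs_piE_sub_le hq0 hq1 hj.symm)

lemma ediam_image_setOf_prefixWord_eq_rpow_le {d : ℝ} (hd : 0 ≤ d) (N : ℕ)
    (w : Fin N → Bool) :
    Metric.ediam (piE q0 q1 '' {i | prefixWord i N = w}) ^ d ≤
      ENNReal.ofReal ((min q0 q1 - 1)⁻¹ ^ d * wordWeight q0 q1 w ^ (-d)) := by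
  have hC : 0 < (min q0 q1 - 1)⁻¹ := inv_pos.2 (sub_pos.2 (lt_min hq0 hq1))
  have hW := wordWeight_pos hq0 hq1 w
  calc Metric.ediam (piE q0 q1 '' {i | prefixWord i N = w}) ^ d
      ≤ ENNReal.ofReal ((min q0 q1 - 1)⁻¹ * (wordWeight q0 q1 w)⁻¹) ^ d :=
        ENNReal.rpow_le_rpow (ediam_image_setOf_prefixWord_eq_le hq0 hq1 N w) hd
    _ = ENNReal.ofReal ((min q0 q1 - 1)⁻¹ ^ d * wordWeight q0 q1 w ^ (-d)) := by
        rw [ENNReal.ofReal_rpow_of_nonneg (by positivity) hd, Real.mul_rpow hC.le (by positivity),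
          Real.inv_rpow hW.le, Real.rpow_neg hW.le]

lemma hausdorffMeasure_image_Omega_eq_zero {d : ℝ} (hd : 0 ≤ d)
    (hS : Tendsto (partitionSum a b q0 q1 d) atTop (𝓝 0)) :
    μH[d] (piE q0 q1 '' Omega a b) = 0 := by
  set C := (min q0 q1 - 1)⁻¹
  have hC : 0 < C := inv_pos.2 (sub_pos.2 (lt_min hq0 hq1))
  let t (N : ℕ) (w : Lwords a b N) : Set ℝ := piE q0 q1 '' {i | prefixWord i N = w}
  have hcover (N : ℕ) : piE q0 q1 '' Omega a b ⊆ ⋃ w, t N w := by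
    rintro _ ⟨i, hi, rfl⟩
    exact Set.mem_iUnion.2 ⟨⟨_, prefixWord_mem_Lwords hi N⟩, i, rfl, rfl⟩
  have hdiam (N : ℕ) (w : Lwords a b N) :
      Metric.ediam (t N w) ≤ ENNReal.ofReal (C * (min q0 q1 ^ N)⁻¹) :=
    (ediam_image_setOf_prefixWord_eq_le hq0 hq1 N w).trans (ENNReal.ofReal_le_ofReal
      (mul_le_mul_of_nonneg_left (inv_anti₀ (pow_pos (zero_lt_one.trans (lt_min hq0 hq1)) N)
        (min_pow_le_wordWeight hq0 hq1 _)) hC.le))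
  have hr : Tendsto (fun N : ℕ => ENNReal.ofReal (C * (min q0 q1 ^ N)⁻¹)) atTop (𝓝 0) := by
    rw [← ENNReal.ofReal_zero, ← mul_zero C]
    exact ENNReal.tendsto_ofReal ((tendsto_inv_atTop_zero.comp
      (tendsto_pow_atTop_atTop_of_one_lt (lt_min hq0 hq1))).const_mul C)
  have hsum (N : ℕ) :
      ∑ w, Metric.ediam (t N w) ^ d ≤ ENNReal.ofReal (C ^ d * partitionSum a b q0 q1 d N) := by
    rw [partitionSum, Finset.mul_sum, ENNReal.ofReal_sum_of_nonneg fun w _ =>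
      mul_nonneg (Real.rpow_nonneg hC.le _) (Real.rpow_nonneg (wordWeight_pos hq0 hq1 w).le _),
      ← Finset.sum_coe_sort (Lwords a b N)]
    exact Finset.sum_le_sum fun w _ => ediam_image_setOf_prefixWord_eq_rpow_le hq0 hq1 hd N w
  have hlim :
      Tendsto (fun N => ENNReal.ofReal (C ^ d * partitionSum a b q0 q1 d N)) atTop (𝓝 0) := by
    rw [← ENNReal.ofReal_zero, ← mul_zero (C ^ d)]
    exact ENNReal.tendsto_ofReal (hS.const_mul _)
  refine le_antisymm ?_ zero_le
  calc μH[d] (piE q0 q1 '' Omega a b)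
      ≤ liminf (fun N => ∑ w, Metric.ediam (t N w) ^ d) atTop :=
        Measure.hausdorffMeasure_le_liminf_sum d _ _ hr t (Eventually.of_forall hdiam)
          (Eventually.of_forall hcover)
    _ ≤ liminf (fun N => ENNReal.ofReal (C ^ d * partitionSum a b q0 q1 d N)) atTop :=
        liminf_le_liminf (Eventually.of_forall hsum)
    _ = 0 := hlim.liminf_eq

end UpperBound

section LowerBound

noncomputable def cylGap (a b : ℕ → Bool) (q0 q1 : ℝ) : ℝ :=
  sInf (piE q0 q1 '' cyl a b true) - sSup (piE q0 q1 '' cyl a b false)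

variable (hq0 : 1 < q0) (hq1 : 1 < q1)
include hq0 hq1

lemma cylGap_div_wordWeight_le {i j : ℕ → Bool} (hi : i ∈ Omega a b) (hj : j ∈ Omega a b)
    {n : ℕ} (hpre : prefixWord i n = prefixWord j n) (hin : i n = true) (hjn : j n = false) :
    cylGap a b q0 q1 / wordWeight q0 q1 (prefixWord i n) ≤ piE q0 q1 i - piE q0 q1 j := by
  rw [piE_sub_piE_of_prefixWord_eq hq0 hq1 hpre, div_eq_inv_mul]
  refine mul_le_mul_of_nonneg_left (sub_le_sub ?_ ?_)
    (inv_pos.2 (wordWeight_pos hq0 hq1 _)).le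
  · exact csInf_le ⟨0, by rintro _ ⟨k, -, rfl⟩; exact piE_nonneg hq0 hq1 k⟩
      ⟨_, ⟨shiftTail_mem_Omega hi n, by simpa [shiftTail] using hin⟩, rfl⟩
  · exact le_csSup ⟨_, by rintro _ ⟨k, -, rfl⟩; exact piE_le hq0 hq1 k⟩
      ⟨_, ⟨shiftTail_mem_Omega hj n, by simpa [shiftTail] using hjn⟩, rfl⟩

lemma exists_forall_wordWeight_rpow_neg_le {s η : ℝ} (hs : 0 < s) (hη : 0 < η) :
    ∃ k, ∀ w : Fin k → Bool, wordWeight q0 q1 w ^ (-s) ≤ η := by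
  obtain ⟨k, hk⟩ := (((tendsto_rpow_neg_atTop hs).comp (tendsto_pow_atTop_atTop_of_one_lt
    (lt_min hq0 hq1))).eventually (eventually_le_nhds hη)).exists
  exact ⟨k, fun w => (Real.rpow_le_rpow_of_nonpos (pow_pos (zero_lt_one.trans (lt_min hq0 hq1)) k)
    (min_pow_le_wordWeight hq0 hq1 w) (by linarith)).trans hk⟩

/-- If two points of `Ω` mapped into `t` differ, take their longest common prefix and use the gap;
otherwise take a deep cylinder around the only such point. -/
lemma exists_cylinder_of_set {s : ℝ} (hs : 0 < s) (hgap : 0 < cylGap a b q0 q1) (t : Set ℝ)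
    {η : ℝ≥0} (hη : 0 < η) :
    ∃ k, ∃ w : Fin k → Bool,
      (∀ i ∈ Omega a b, piE q0 q1 i ∈ t → prefixWord i k = w) ∧
      ENNReal.ofReal (cylGap a b q0 q1 ^ s * wordWeight q0 q1 w ^ (-s)) ≤
        (⨆ _ : t.Nonempty, Metric.ediam t ^ s) + η := by
  rcases subsingleton_or_exists_split {i ∈ Omega a b | piE q0 q1 i ∈ t} with
    hsub | ⟨k, hpre, i, hi, j, hj, hik, hjk⟩
  · obtain ⟨k, hk⟩ := exists_forall_wordWeight_rpow_neg_le hq0 hq1 hs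
      (div_pos (NNReal.coe_pos.2 hη) (Real.rpow_pos_of_pos hgap s))
    obtain ⟨i₀, hi₀⟩ :
        ∃ i₀ : ℕ → Bool, ∀ i ∈ Omega a b, piE q0 q1 i ∈ t → i = i₀ := by
      rcases hsub.eq_empty_or_singleton with hA | ⟨i₀, hA⟩
      · exact ⟨fun _ => false, fun i hi hit =>
          (Set.eq_empty_iff_forall_notMem.1 hA i ⟨hi, hit⟩).elim⟩
      · exact ⟨i₀, fun i hi hit => by
          rw [← Set.mem_singleton_iff, ← hA]; exact ⟨hi, hit⟩⟩
    refine ⟨k, prefixWord i₀ k, fun i hi hit => by rw [hi₀ i hi hit], le_add_left ?_⟩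
    rw [← ENNReal.ofReal_coe_nnreal]
    refine ENNReal.ofReal_le_ofReal ?_
    have := hk (prefixWord i₀ k)
    rw [le_div_iff₀ (Real.rpow_pos_of_pos hgap s)] at this
    linarith
  · refine ⟨k, prefixWord i k, fun i' hi' hit' => hpre i' ⟨hi', hit'⟩ i hi, ?_⟩
    have hW := wordWeight_pos hq0 hq1 (prefixWord i k)
    rw [iSup_pos ⟨_, hi.2⟩]
    refine le_add_right ?_
    calc ENNReal.ofReal (cylGap a b q0 q1 ^ s * wordWeight q0 q1 (prefixWord i k) ^ (-s))
        = ENNReal.ofReal (cylGap a b q0 q1 / wordWeight q0 q1 (prefixWord i k)) ^ s := by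
          rw [ENNReal.ofReal_rpow_of_nonneg (div_nonneg hgap.le hW.le) hs.le,
            Real.div_rpow hgap.le hW.le, Real.rpow_neg hW.le, div_eq_mul_inv]
      _ ≤ edist (piE q0 q1 i) (piE q0 q1 j) ^ s := by
          refine ENNReal.rpow_le_rpow ?_ hs.le
          rw [edist_dist, Real.dist_eq]
          exact ENNReal.ofReal_le_ofReal ((cylGap_div_wordWeight_le hq0 hq1 hi.1 hj.1
            (hpre i hi j hj) hik hjk).trans (le_abs_self _))
      _ ≤ Metric.ediam t ^ s :=
          ENNReal.rpow_le_rpow (Metric.edist_le_ediam_of_mem hi.2 hj.2) hs.le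

lemma ofReal_cylGap_rpow_le_hausdorffMeasure {s : ℝ} (hs : 0 < s) (hgap : 0 < cylGap a b q0 q1)
    (hS : ∀ N, 1 ≤ partitionSum a b q0 q1 s N) :
    ENNReal.ofReal (cylGap a b q0 q1 ^ s) ≤ μH[s] (piE q0 q1 '' Omega a b) := by
  rw [Measure.hausdorffMeasure_apply]
  refine le_iSup₂_of_le 1 one_pos (le_iInf fun t => le_iInf fun hcov => le_iInf fun _ => ?_)
  refine ENNReal.le_of_forall_pos_le_add fun ε hε _ => ?_
  obtain ⟨η, hη, hηε⟩ :=
    ENNReal.exists_pos_sum_of_countable (ENNReal.coe_ne_zero.2 hε.ne') ℕ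
  choose k w hpre hw using fun n => exists_cylinder_of_set hq0 hq1 hs hgap (t n) (hη n)
  obtain ⟨F, hF⟩ := (isCompact_Omega a b).elim_finite_subcover
    (fun n => {i | prefixWord i (k n) = w n}) (fun n => isOpen_setOf_prefixWord_eq _ _)
    fun i hi => by
      obtain ⟨n, hn⟩ := Set.mem_iUnion.1 (hcov ⟨i, hi, rfl⟩)
      exact Set.mem_iUnion.2 ⟨n, hpre n i hi hn⟩
  have hsum := one_le_sum_of_cover hq0 hq1 hS F k w fun i hi => by simpa using hF hi
  set δ := cylGap a b q0 q1 ^ s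
  have hδ : 0 ≤ δ := (Real.rpow_pos_of_pos hgap s).le
  calc ENNReal.ofReal δ
      ≤ ENNReal.ofReal (∑ n ∈ F, δ * wordWeight q0 q1 (w n) ^ (-s)) := by
        rw [← Finset.mul_sum]; exact ENNReal.ofReal_le_ofReal (le_mul_of_one_le_right hδ hsum)
    _ = ∑ n ∈ F, ENNReal.ofReal (δ * wordWeight q0 q1 (w n) ^ (-s)) :=
        ENNReal.ofReal_sum_of_nonneg fun n _ =>
          mul_nonneg hδ (Real.rpow_nonneg (wordWeight_pos hq0 hq1 _).le _)
    _ ≤ ∑ n ∈ F, ((⨆ _ : (t n).Nonempty, Metric.ediam (t n) ^ s) + η n) :=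
        Finset.sum_le_sum fun n _ => hw n
    _ ≤ (∑' n, ⨆ _ : (t n).Nonempty, Metric.ediam (t n) ^ s) + ε := by
        rw [Finset.sum_add_distrib]
        exact add_le_add (ENNReal.sum_le_tsum F) ((ENNReal.sum_le_tsum F).trans hηε.le)

end LowerBound

section Dimension

variable (hq0 : 1 < q0) (hq1 : 1 < q1)
include hq0 hq1

lemma dimH_image_Omega_le {s : ℝ} (hs : 0 ≤ s) (hP : pressure a b q0 q1 s = 0) :
    dimH (piE q0 q1 '' Omega a b) ≤ ENNReal.ofReal s := by
  refine dimH_le fun d hd => ?_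
  by_contra! hlt
  have hsd : s < d := by
    rwa [← ENNReal.ofReal_coe_nnreal, ENNReal.ofReal_lt_ofReal_iff_of_nonneg hs] at hlt
  have hPd : pressure a b q0 q1 d < 0 := hP ▸ pressure_strictAntiOn hq0 hq1 hs d.2 hsd
  exact ENNReal.zero_ne_top ((hausdorffMeasure_image_Omega_eq_zero hq0 hq1 d.2
    (tendsto_partitionSum_of_pressure_neg hq0 hq1 d.2 hPd)).symm.trans hd)

lemma le_dimH_image_Omega {s : ℝ} (hs : 0 ≤ s) (hP : 0 ≤ pressure a b q0 q1 s)
    (hgap : 0 < cylGap a b q0 q1) : ENNReal.ofReal s ≤ dimH (piE q0 q1 '' Omega a b) := by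
  rcases hs.eq_or_lt with rfl | hs
  · simp
  have hμ : μH[(s.toNNReal : ℝ)] (piE q0 q1 '' Omega a b) ≠ 0 := by
    rw [Real.coe_toNNReal _ hs.le]
    exact (lt_of_lt_of_le (ENNReal.ofReal_pos.2 (Real.rpow_pos_of_pos hgap s))
      (ofReal_cylGap_rpow_le_hausdorffMeasure hq0 hq1 hs hgap
        (one_le_partitionSum hq0 hq1 hs.le hP))).ne'
  exact le_dimH_of_hausdorffMeasure_ne_zero hμ

end Dimension

theorem stmt11_general (a b : ℕ → Bool) (q0 q1 : ℝ)
    (hq0 : 1 < q0) (hq1 : 1 < q1)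
    (hsep : sSup (piE q0 q1 '' cyl a b false) < sInf (piE q0 q1 '' cyl a b true)) :
    (∃! s : ℝ, 0 ≤ s ∧
      Filter.Tendsto
        (fun n : ℕ =>
          Real.log (∑ w ∈ Lwords a b n, (∏ j : Fin n, qb q0 q1 (w j)) ^ (-s)) / n)
        Filter.atTop (nhds 0)) ∧
    (∀ s : ℝ, 0 ≤ s →
      Filter.Tendsto
        (fun n : ℕ =>
          Real.log (∑ w ∈ Lwords a b n, (∏ j : Fin n, qb q0 q1 (w j)) ^ (-s)) / n)
        Filter.atTop (nhds 0) →
      dimH (piE q0 q1 '' Omega a b) = ENNReal.ofReal s) ∧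
    (entropy a b = 0 → dimH (piE q0 q1 '' Omega a b) = 0) := by
  have hlim {s : ℝ} (hs : 0 ≤ s) :
      Tendsto (fun n : ℕ => Real.log (partitionSum a b q0 q1 s n) / n) atTop (𝓝 0) ↔
        pressure a b q0 q1 s = 0 :=
    ⟨fun h => tendsto_nhds_unique (tendsto_pressure hq0 hq1 hs) h,
      fun h => h ▸ tendsto_pressure hq0 hq1 hs⟩
  have hdim {s : ℝ} (hs : 0 ≤ s) (hP : pressure a b q0 q1 s = 0) :
      dimH (piE q0 q1 '' Omega a b) = ENNReal.ofReal s :=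
    (dimH_image_Omega_le hq0 hq1 hs hP).antisymm
      (le_dimH_image_Omega hq0 hq1 hs hP.ge (sub_pos.2 hsep))
  obtain ⟨s₀, hs₀, hP₀⟩ := exists_pressure_eq_zero hq0 hq1 (a := a) (b := b)
  refine ⟨⟨s₀, ⟨hs₀, (hlim hs₀).2 hP₀⟩, fun s ⟨hs, h⟩ =>
      (pressure_strictAntiOn hq0 hq1).injOn hs hs₀ (((hlim hs).1 h).trans hP₀.symm)⟩,
    fun s hs h => hdim hs ((hlim hs).1 h), fun h => ?_⟩
  simpa using hdim le_rfl ((entropy_eq_pressure_zero hq0 hq1).symm.trans h)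

/-- Lemma 2.1: if `max π_{q₀,q₁}([0]_{a,b}) < min π_{q₀,q₁}([1]_{a,b})`, then
`dim_H π_{q₀,q₁}(Ω_{a,b})` equals the unique `s ≥ 0` with
`lim_{n→∞} (1/n) log Σ_{i₁⋯iₙ ∈ L_{a,b,n}} (q_{i₁}⋯q_{iₙ})^{−s} = 0`;
in particular `h(Ω_{a,b}) = 0` implies `dim_H π_{q₀,q₁}(Ω_{a,b}) = 0`. -/
theorem stmt11 (a b : ℕ → Bool) (q0 q1 : ℝ) (ha : a 0 = false) (hb : b 0 = true)
    (hq0 : 1 < q0) (hq1 : 1 < q1)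
    (hsep : sSup (piE q0 q1 '' cyl a b false) < sInf (piE q0 q1 '' cyl a b true)) :
    (∃! s : ℝ, 0 ≤ s ∧
      Filter.Tendsto
        (fun n : ℕ =>
          Real.log (∑ w ∈ Lwords a b n, (∏ j : Fin n, qb q0 q1 (w j)) ^ (-s)) / n)
        Filter.atTop (nhds 0)) ∧
    (∀ s : ℝ, 0 ≤ s →
      Filter.Tendsto
        (fun n : ℕ =>
          Real.log (∑ w ∈ Lwords a b n, (∏ j : Fin n, qb q0 q1 (w j)) ^ (-s)) / n)
        Filter.atTop (nhds 0) →
      dimH (piE q0 q1 '' Omega a b) = ENNReal.ofReal s) ∧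
    (entropy a b = 0 → dimH (piE q0 q1 '' Omega a b) = 0) :=
  stmt11_general a b q0 q1 hq0 hq1 hsep
end

section
/- Let a = a₁a₂⋯ and b = b₁b₂⋯ in {0,1}^ℕ with a ⪯ b. Then: (i) if aₙ₊₁aₙ₊₂⋯ ∈ ]a,b[ for some n ≥ 1, then Ω_{a,b} = Ω_{(a₁⋯aₙ)^∞, b}; (ii) if bₙ₊₁bₙ₊₂⋯ ∈ ]a,b[ for some n ≥ 1, then Ω_{a,b} = Ω_{a, (b₁⋯bₙ)^∞}. Here (w)^∞ denotes the periodic sequence with period the finite word w. -/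
open Filter Topology

section Stmt17Aux

private lemma blt {x y : Bool} : x < y ↔ x = false ∧ y = true := Bool.lt_iff

private lemma bool_lt_not {x y : Bool} (h : x < y) : (!y) < (!x) := by
  cases x <;> cases y <;> revert h <;> decide

private lemma bool_not_lt {x y : Bool} (h : (!y) < (!x)) : x < y := by
  cases x <;> cases y <;> revert h <;> decide

private lemma bool_eq_not {x y : Bool} (h : x = y) : (!y) = (!x) := by rw [h]

private lemma bool_not_eq {x y : Bool} (h : (!y) = (!x)) : x = y := by
  cases x <;> cases y <;> revert h <;> decide

private lemma lexLt_asymm {u v : ℕ → Bool} (h : lexLt u v) (h' : lexLt v u) : False := by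
  obtain ⟨n, hag, hlt⟩ := h
  obtain ⟨n', hag', hlt'⟩ := h'
  rcases lt_trichotomy n n' with hc | hc | hc
  · exact absurd (hag' n hc).symm (ne_of_lt hlt)
  · subst hc
    obtain ⟨e1, e2⟩ := blt.mp hlt
    obtain ⟨e1', e2'⟩ := blt.mp hlt'
    rw [e1] at e2'
    exact absurd e2' (by decide)
  · exact absurd (hag n' hc).symm (ne_of_lt hlt')

private lemma lexLt_trans {u v w : ℕ → Bool} (h : lexLt u v) (h' : lexLt v w) : lexLt u w := by
  obtain ⟨n, hag, hlt⟩ := h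
  obtain ⟨n', hag', hlt'⟩ := h'
  rcases lt_trichotomy n n' with hc | hc | hc
  · refine ⟨n, fun m hm => (hag m hm).trans (hag' m (hm.trans hc)), ?_⟩
    rw [← hag' n hc]; exact hlt
  · subst hc
    obtain ⟨e1, e2⟩ := blt.mp hlt
    obtain ⟨e1', e2'⟩ := blt.mp hlt'
    rw [e2] at e1'
    exact absurd e1' (by decide)
  · refine ⟨n', fun m hm => (hag m (hm.trans hc)).trans (hag' m hm), ?_⟩
    rw [hag n' hc]; exact hlt'

private lemma lexLt_first {u v : ℕ → Bool} {j : ℕ} (h : lexLt u v)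
    (hag : ∀ k, k < j → u k = v k) (hne : u j ≠ v j) :
    u j = false ∧ v j = true := by
  obtain ⟨n, hn, hlt⟩ := h
  rcases lt_trichotomy n j with hc | hc | hc
  · exact absurd (hag n hc) (ne_of_lt hlt)
  · subst hc; exact blt.mp hlt
  · exact absurd (hn j hc) hne

private lemma lexLt_elim {u v : ℕ → Bool} (h : lexLt u v) :
    ∃ p : ℕ, (∀ k, k < p → u k = v k) ∧ u p = false ∧ v p = true := by
  classical
  have hex : ∃ k, u k ≠ v k := by
    obtain ⟨w, _, hw⟩ := h
    exact ⟨w, ne_of_lt hw⟩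
  exact ⟨Nat.find hex, fun k hk => not_not.mp (Nat.find_min hex hk),
    lexLt_first h (fun k hk => not_not.mp (Nat.find_min hex hk)) (Nat.find_spec hex)⟩

private lemma lex_total {u v : ℕ → Bool} (h : u ≠ v) : lexLt u v ∨ lexLt v u := by
  classical
  have hex : ∃ k, u k ≠ v k := by
    by_contra hc
    push_neg at hc
    exact h (funext hc)
  have hag : ∀ k, k < Nat.find hex → u k = v k :=
    fun k hk => not_not.mp (Nat.find_min hex hk)
  have hne := Nat.find_spec hex
  cases hu : u (Nat.find hex) <;> cases hv : v (Nat.find hex)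
  · rw [hu, hv] at hne; exact absurd rfl hne
  · exact Or.inl ⟨Nat.find hex, hag, by rw [hu, hv]; decide⟩
  · exact Or.inr ⟨Nat.find hex, fun k hk => (hag k hk).symm, by rw [hu, hv]; decide⟩
  · rw [hu, hv] at hne; exact absurd rfl hne

private lemma lexLt_neg {u v : ℕ → Bool} (h : lexLt u v) :
    lexLt (fun k => !v k) (fun k => !u k) := by
  obtain ⟨n, hag, hlt⟩ := h
  exact ⟨n, fun m hm => bool_eq_not (hag m hm), bool_lt_not hlt⟩

private lemma lexLt_neg' {u v : ℕ → Bool} (h : lexLt (fun k => !v k) (fun k => !u k)) :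
    lexLt u v := by
  obtain ⟨n, hag, hlt⟩ := h
  exact ⟨n, fun m hm => bool_not_eq (hag m hm), bool_not_lt hlt⟩

private lemma mem_Omega_neg {a b i : ℕ → Bool} :
    (fun k => !i k) ∈ Omega (fun k => !b k) (fun k => !a k) ↔ i ∈ Omega a b := by
  simp only [Omega, Set.mem_setOf_eq]
  constructor
  · intro h m hm
    exact h m ⟨lexLt_neg hm.2, lexLt_neg hm.1⟩
  · intro h m hm
    have h1 : lexLt (fun k => !b k) (fun k => !(shiftTail i m k)) := hm.1
    have h2 : lexLt (fun k => !(shiftTail i m k)) (fun k => !a k) := hm.2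
    exact h m ⟨lexLt_neg' h2, lexLt_neg' h1⟩

private lemma main_lemma (a b : ℕ → Bool) (n : ℕ) (hn : 1 ≤ n)
    (h1 : lexLt a (shiftTail a n)) (h2 : lexLt (shiftTail a n) b) :
    Omega a b = Omega (fun k => a (k % n)) b := by
  classical
  have hper : ∀ k q : ℕ, a ((k + n * q) % n) = a (k % n) := fun k q => by
    rw [Nat.add_mul_mod_self_left]
  obtain ⟨j, hjag0, hj1, hj2'⟩ := lexLt_elim h1
  have hjag : ∀ k, k < j → a k = a (n + k) := hjag0
  have hj2 : a (n + j) = true := hj2'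
  have hab : lexLt a b := lexLt_trans h1 h2
  obtain ⟨d, hdag, hd1, hd2⟩ := lexLt_elim hab
  have hdj : d ≤ j := by
    by_contra hcon
    push_neg at hcon
    have hb : lexLt b (shiftTail a n) := by
      refine ⟨j, fun k hk => ?_, ?_⟩
      · rw [← hdag k (hk.trans hcon)]; exact hjag k hk
      · have hbj : b j = false := by rw [← hdag j hcon]; exact hj1
        show b j < a (n + j)
        rw [hbj, hj2]; decide
    exact lexLt_asymm hb h2
  have P1 : ∀ k, k < n + j → a (k % n) = a k := by
    intro k
    induction k using Nat.strong_induction_on with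
    | _ k ih =>
      intro hk
      rcases lt_or_ge k n with hkn | hkn
      · rw [Nat.mod_eq_of_lt hkn]
      · have e1 : k % n = (k - n) % n := Nat.mod_eq_sub_mod hkn
        rw [e1, ih (k - n) (by omega) (by omega), hjag (k - n) (by omega),
          show n + (k - n) = k from by omega]
  have haj : a ((n + j) % n) = false := by
    rw [Nat.add_mod_left, P1 j (by omega), hj1]
  have ha'a : lexLt (fun k => a (k % n)) a := by
    refine ⟨n + j, fun m hm => P1 m hm, ?_⟩
    show a ((n + j) % n) < a (n + j)
    rw [haj, hj2]; decide
  ext i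
  simp only [Omega, Set.mem_setOf_eq]
  constructor
  · intro hi m hm
    obtain ⟨H1, H2⟩ := hm
    have hta : ¬ lexLt a (shiftTail i m) := fun h => hi m ⟨h, H2⟩
    obtain ⟨p, hpag0, hp10, hp20⟩ := lexLt_elim H1
    have hpag : ∀ k, k < p → a (k % n) = i (m + k) := hpag0
    have hp1 : a (p % n) = false := hp10
    have hp2 : i (m + p) = true := hp20
    have hpN : n + j ≤ p := by
      by_contra hcon
      push_neg at hcon
      apply hta
      refine ⟨p, fun k hk => ?_, ?_⟩
      · rw [← P1 k (by omega)]; exact hpag k hk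
      · show a p < i (m + p)
        rw [← P1 p hcon, hp1, hp2]; decide
    have hdm := Nat.div_add_mod (p - d - 1) n
    set q0 := (p - d - 1) / n with hq0def
    set s0 := (p - d - 1) % n with hs0def
    have hs0 : s0 < n := by rw [hs0def]; exact Nat.mod_lt _ (by omega)
    have hdp : d + 1 ≤ p := by omega
    have hep : p = (d + 1 + s0) + n * q0 := by
      calc p = (d + 1) + (p - d - 1) := by omega
        _ = (d + 1) + (n * q0 + s0) := by rw [hdm]
        _ = (d + 1 + s0) + n * q0 := by ring
    have heN : d + 1 + s0 ≤ n + j := by omega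
    have hw : ∀ k, k < d + 1 + s0 → i (m + n * q0 + k) = a k := by
      intro k hk
      have e1 : i (m + n * q0 + k) = i (m + (k + n * q0)) := congrArg i (by ring)
      have e2 : a ((k + n * q0) % n) = i (m + (k + n * q0)) := by
        apply hpag
        rw [hep]
        exact Nat.add_lt_add_right hk (n * q0)
      have e3 : a ((k + n * q0) % n) = a (k % n) := hper k q0
      have e4 : a (k % n) = a k := P1 k (by omega)
      rw [e1, ← e2, e3, e4]
    have hwp : i (m + n * q0 + (d + 1 + s0)) = true := by
      have e1 : m + n * q0 + (d + 1 + s0) = m + p := by rw [hep]; ring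
      rw [e1]; exact hp2
    rcases lt_or_eq_of_le heN with hltN | heqN
    · -- Case A : d + 1 + s0 < n + j
      refine hi (m + n * q0) ⟨?_, ?_⟩
      · refine ⟨d + 1 + s0, fun k hk => (hw k hk).symm, ?_⟩
        show a (d + 1 + s0) < i (m + n * q0 + (d + 1 + s0))
        have hae : a (d + 1 + s0) = false := by
          rw [← P1 _ hltN]
          have e6 : a (((d + 1 + s0) + n * q0) % n) = a ((d + 1 + s0) % n) := hper _ q0
          rw [← e6, ← hep]
          exact hp1
        rw [hae, hwp]; decide
      · refine ⟨d, fun k hk => (hw k (by omega)).trans (hdag k hk), ?_⟩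
        show i (m + n * q0 + d) < b d
        rw [(hw d (by omega)).trans hd1, hd2]; decide
    · -- Case B : d + 1 + s0 = n + j
      have hjd : j = d := by omega
      have hwN : i (m + n * q0 + (n + j)) = true := by rw [← heqN]; exact hwp
      by_cases hwa : shiftTail i (m + n * q0) = a
      · -- w = a : use sigma^n w = sigma^n a in ]a,b[
        have hzz : shiftTail i (m + (n * q0 + n)) = shiftTail a n := by
          funext k
          show i (m + (n * q0 + n) + k) = a (n + k)
          calc i (m + (n * q0 + n) + k) = i (m + n * q0 + (n + k)) := congrArg i (by ring)
            _ = a (n + k) := congrFun hwa (n + k)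
        refine hi (m + (n * q0 + n)) ⟨?_, ?_⟩
        · rw [hzz]; exact h1
        · rw [hzz]; exact h2
      · rcases lex_total hwa with hlt' | hgt'
        · -- w ≺ a
          obtain ⟨q', hqag0, hq1', hq2'⟩ := lexLt_elim hlt'
          have hqag : ∀ k, k < q' → i (m + n * q0 + k) = a k := hqag0
          have hq1 : i (m + n * q0 + q') = false := hq1'
          have hq2 : a q' = true := hq2'
          have hq'N : n + j < q' := by
            rcases lt_trichotomy q' (n + j) with hc | hc | hc
            · have := hw q' (by omega)
              rw [this, hq2] at hq1
              exact absurd hq1 (by decide)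
            · rw [hc, hwN] at hq1
              exact absurd hq1 (by decide)
            · exact hc
          refine hi (m + (n * q0 + n)) ⟨?_, ?_⟩
          · refine ⟨d, fun k hk => ?_, ?_⟩
            · show a k = i (m + (n * q0 + n) + k)
              have e1 : i (m + (n * q0 + n) + k) = i (m + n * q0 + (n + k)) :=
                congrArg i (by ring)
              rw [e1, hqag (n + k) (by omega), ← hjag k (by omega)]
            · show a d < i (m + (n * q0 + n) + d)
              have e1 : i (m + (n * q0 + n) + d) = i (m + n * q0 + (n + d)) :=
                congrArg i (by ring)
              rw [e1, hqag (n + d) (by omega), hd1,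
                show a (n + d) = true from by rw [← hjd]; exact hj2]
              decide
          · refine lexLt_trans ?_ h2
            refine ⟨q' - n, fun k hk => ?_, ?_⟩
            · show i (m + (n * q0 + n) + k) = a (n + k)
              have e1 : i (m + (n * q0 + n) + k) = i (m + n * q0 + (n + k)) :=
                congrArg i (by ring)
              rw [e1]; exact hqag (n + k) (by omega)
            · show i (m + (n * q0 + n) + (q' - n)) < a (n + (q' - n))
              have e0 : n + (q' - n) = q' := by omega
              have e1 : i (m + (n * q0 + n) + (q' - n)) = i (m + n * q0 + q') := by
                rw [show m + (n * q0 + n) + (q' - n) = m + n * q0 + (n + (q' - n)) from by ring,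
                  e0]
              rw [e1, hq1, e0, hq2]
              decide
        · -- a ≺ w
          refine hi (m + n * q0) ⟨hgt', ?_⟩
          refine ⟨d, fun k hk => (hw k (by omega)).trans (hdag k hk), ?_⟩
          show i (m + n * q0 + d) < b d
          rw [(hw d (by omega)).trans hd1, hd2]; decide
  · intro hi m hm
    exact hi m ⟨lexLt_trans ha'a hm.1, hm.2⟩

end Stmt17Aux

/-- Lemma 3.2: for `a ⪯ b`: (i) if the tail `a_{n+1}a_{n+2}⋯ ∈ ]a,b[` for some `n ≥ 1`, then
`Ω_{a,b} = Ω_{(a₁⋯aₙ)^∞, b}`; (ii) if `b_{n+1}b_{n+2}⋯ ∈ ]a,b[` for some `n ≥ 1`, then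
`Ω_{a,b} = Ω_{a, (b₁⋯bₙ)^∞}`. -/
theorem stmt17 (a b : ℕ → Bool) (hab : lexLe a b) :
    (∀ n : ℕ, 1 ≤ n → lexLt a (shiftTail a n) → lexLt (shiftTail a n) b →
      Omega a b = Omega (fun k => a (k % n)) b) ∧
    (∀ n : ℕ, 1 ≤ n → lexLt a (shiftTail b n) → lexLt (shiftTail b n) b →
      Omega a b = Omega a (fun k => b (k % n))) := by
  constructor
  · intro n hn h1 h2
    exact main_lemma a b n hn h1 h2
  · intro n hn h1 h2
    have h1' : lexLt (fun k => !b k) (shiftTail (fun k => !b k) n) := lexLt_neg h2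
    have h2' : lexLt (shiftTail (fun k => !b k) n) (fun k => !a k) := lexLt_neg h1
    have key : Omega (fun k => !b k) (fun k => !a k)
        = Omega (fun k => !(b (k % n))) (fun k => !a k) :=
      main_lemma (fun k => !b k) (fun k => !a k) n hn h1' h2'
    ext i
    constructor
    · intro hi
      have h' : (fun k => !i k) ∈ Omega (fun k => !b k) (fun k => !a k) :=
        mem_Omega_neg.mpr hi
      rw [key] at h'
      exact mem_Omega_neg.mp h'
    · intro hi
      have h' : (fun k => !i k) ∈ Omega (fun k => !(b (k % n))) (fun k => !a k) :=
        mem_Omega_neg.mpr hi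
      rw [← key] at h'
      exact mem_Omega_neg.mp h'
end
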